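/- arXiv:1505.02421 — 5 statements merged into one kernel-verified Lean document; each statement's English description precedes it below -/
import Mathlib

section
/- Let b, d > 0 and let k ≥ 1 be an integer. For the random walk with step-up probability p = b/(b+d) started at 1, one has | P_1[τ_k < τ_0] − max(b − d, 0)/b | ≤ 1/k. -/
open MeasureTheory ProbabilityTheory Filter Set

/-- The simple random walk started at `j` with increments `ξ`. -/
noncomputable def walk {Ω : Type*} (j : ℤ) (ξ : ℕ → Ω → ℤ) (n : ℕ) (ω : Ω) : ℤ :=
  j + ∑ i ∈ Finset.range n, ξ i ω

/-- The hitting time `τ_m = inf {n ≥ 0 : S_n = m}` (with `inf ∅ = ∞`) of the level `m`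
by the walk started at `j` with increments `ξ`. -/
noncomputable def hitTime {Ω : Type*} (j : ℤ) (ξ : ℕ → Ω → ℤ) (m : ℤ) (ω : Ω) : ℕ∞ :=
  ⨅ (n : ℕ) (_ : walk j ξ n ω = m), (n : ℕ∞)

open scoped ENNReal

/-! First-step analysis. The first step is independent of the later ones, and the later ones have
the same joint law as all the steps, so `h j = P_j[τ_k < τ_0]` satisfies
`h j = p h (j + 1) + q h (j - 1)` for `0 < j < k`, with `h 0 = 0` and `h k = 1`. The increments
of `h` then form a geometric progression of ratio `q / p = d / b`, so `h 1 = 1 / ∑_{i<k} (d/b)^i`.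
For `r = d / b ≥ 1` this sum is at least `k`; for `r < 1` one has
`1 / ∑_{i<k} r^i - (1 - r) = r^k / ∑_{i<k} r^i ≤ 1 / k`. -/

section Walk

variable {Ω : Type*} (ξ : ℕ → Ω → ℤ)

@[simp]
lemma walk_zero (j : ℤ) (ω : Ω) : walk j ξ 0 ω = j := by
  simp [walk]

lemma walk_succ (j : ℤ) (n : ℕ) (ω : Ω) :
    walk j ξ (n + 1) ω = walk (j + ξ 0 ω) (fun i => ξ (i + 1)) n ω := by
  simp only [walk, Finset.sum_range_succ']
  ring

lemma measurable_walk [MeasurableSpace Ω] (hξ : ∀ i, Measurable (ξ i)) (j : ℤ) (n : ℕ) :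
    Measurable (walk j ξ n) :=
  measurable_const.add (Finset.measurable_sum _ fun i _ => hξ i)

variable {ξ}

lemma natCast_le_hitTime_iff {j m : ℤ} {n : ℕ} {ω : Ω} :
    (n : ℕ∞) ≤ hitTime j ξ m ω ↔ ∀ i < n, walk j ξ i ω ≠ m := by
  simp only [hitTime, le_iInf_iff, Nat.cast_le]
  exact forall_congr' fun i =>
    ⟨fun h hi hw => (h hw).not_gt hi, fun h hw => not_lt.1 fun hi => h hi hw⟩

lemma hitTime_self (j : ℤ) (ω : Ω) : hitTime j ξ j ω = 0 :=
  nonpos_iff_eq_zero.1 (iInf₂_le 0 (walk_zero ξ j ω))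

lemma hitTime_eq_add_one {j m : ℤ} (hjm : j ≠ m) (ω : Ω) :
    hitTime j ξ m ω = hitTime (j + ξ 0 ω) (fun i => ξ (i + 1)) m ω + 1 := by
  refine ENat.eq_of_forall_natCast_le_iff fun n => ?_
  cases n with
  | zero => simp
  | succ n =>
    rw [natCast_le_hitTime_iff, Nat.cast_add_one, ENat.add_le_add_iff_right ENat.one_ne_top,
      natCast_le_hitTime_iff, Nat.forall_lt_succ_left]
    simp [walk_succ, hjm]

lemma measurable_hitTime [MeasurableSpace Ω] (hξ : ∀ i, Measurable (ξ i)) (j m : ℤ) :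
    Measurable (hitTime j ξ m) := by
  have hle : ∀ n : ℕ, MeasurableSet {ω | (n : ℕ∞) ≤ hitTime j ξ m ω} := fun n => by
    simp only [natCast_le_hitTime_iff, Set.ofPred_forall]
    exact .iInter fun i => .iInter fun _ =>
      (measurable_walk ξ hξ j i (measurableSet_singleton m)).compl
  refine ENat.measurable_iff.2 fun n => ?_
  have : hitTime j ξ m ⁻¹' {(n : ℕ∞)} =
      {ω | (n : ℕ∞) ≤ hitTime j ξ m ω} \ {ω | ((n + 1 : ℕ) : ℕ∞) ≤ hitTime j ξ m ω} := by
    ext ω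
    simp only [mem_preimage, mem_singleton_iff, Set.mem_sdiff, Nat.cast_add_one,
      ENat.add_one_le_iff (ENat.natCast_ne_top n)]
    exact ⟨fun h => ⟨h.ge, h.le.not_gt⟩, fun h => le_antisymm (not_lt.1 h.2) h.1⟩
  rw [this]
  exact (hle n).diff (hle (n + 1))

end Walk

/-- The event `τ_k < τ_0` for the walk started at `j`. -/
def hitsBeforeZero {Ω : Type*} (ξ : ℕ → Ω → ℤ) (k j : ℤ) : Set Ω :=
  {ω | hitTime j ξ k ω < hitTime j ξ 0 ω}

section HitsBeforeZero

variable {Ω : Type*} {ξ : ℕ → Ω → ℤ} {k j : ℤ}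

lemma measurableSet_hitsBeforeZero [MeasurableSpace Ω] (hξ : ∀ i, Measurable (ξ i)) :
    MeasurableSet (hitsBeforeZero ξ k j) :=
  ((measurable_hitTime hξ j k).prodMk (measurable_hitTime hξ j 0))
    (Set.to_countable {q : ℕ∞ × ℕ∞ | q.1 < q.2}).measurableSet

@[simp]
lemma hitsBeforeZero_zero : hitsBeforeZero ξ k 0 = ∅ := by
  simp [hitsBeforeZero, hitTime_self]

lemma hitsBeforeZero_self (hk : k ≠ 0) : hitsBeforeZero ξ k k = univ := by
  ext ω
  simp [hitsBeforeZero, hitTime_self, hitTime_eq_add_one hk]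

lemma mem_hitsBeforeZero_iff_tail (h0 : j ≠ 0) (hk : j ≠ k) (ω : Ω) :
    ω ∈ hitsBeforeZero ξ k j ↔ ω ∈ hitsBeforeZero (fun i => ξ (i + 1)) k (j + ξ 0 ω) := by
  simp only [hitsBeforeZero, mem_ofPred_eq, hitTime_eq_add_one hk, hitTime_eq_add_one h0,
    ENat.add_lt_add_iff_right ENat.one_ne_top]

end HitsBeforeZero

noncomputable def stepLaw (p : ℝ) : Measure ℤ :=
  ENNReal.ofReal p • Measure.dirac 1 + ENNReal.ofReal (1 - p) • Measure.dirac (-1)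

lemma map_eq_stepLaw {Ω : Type*} [MeasurableSpace Ω] {P : Measure Ω} [IsProbabilityMeasure P]
    {X : Ω → ℤ} (hX : Measurable X) {p : ℝ} (hup : P {ω | X ω = 1} = ENNReal.ofReal p)
    (hdown : P {ω | X ω = -1} = ENNReal.ofReal (1 - p)) :
    P.map X = stepLaw p := by
  have := Measure.isProbabilityMeasure_map (μ := P) hX.aemeasurable
  have h1 : P.map X {1} = ENNReal.ofReal p := by
    rw [Measure.map_apply hX (measurableSet_singleton _)]; exact hup
  have h2 : P.map X {-1} = ENNReal.ofReal (1 - p) := by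
    rw [Measure.map_apply hX (measurableSet_singleton _)]; exact hdown
  have hpair : P.map X {1, -1} = 1 := by
    refine le_antisymm prob_le_one ?_
    rw [Set.insert_eq, measure_union (by simp) (measurableSet_singleton _), h1, h2]
    simpa using ENNReal.ofReal_add_le (p := p) (q := 1 - p)
  refine Measure.ext_iff_singleton.2 fun c => ?_
  by_cases hc1 : c = 1
  · subst hc1; simp [h1, stepLaw]
  by_cases hc2 : c = -1
  · subst hc2; simp [h2, stepLaw]
  have hc : ({c} : Set ℤ) ⊆ {1, -1}ᶜ := by simp [hc1, hc2]
  rw [measure_mono_null hc ((prob_compl_eq_zero_iff (by simp)).2 hpair)]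
  simp [stepLaw, hc1, hc2]

lemma lintegral_stepLaw (p : ℝ) (f : ℤ → ℝ≥0∞) :
    ∫⁻ a, f a ∂stepLaw p = ENNReal.ofReal p * f 1 + ENNReal.ofReal (1 - p) * f (-1) := by
  simp [stepLaw, lintegral_add_measure]

lemma ProbabilityTheory.iIndepFun.indepFun_head_tail {Ω β : Type*} [MeasurableSpace Ω]
    [MeasurableSpace β]{P : Measure Ω} {X : ℕ → Ω → β}
    (hX : ∀ i, Measurable (X i)) (h : iIndepFun X P) :
    IndepFun (X 0) (fun ω i => X (i + 1) ω) P := by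
  rw [IndepFun_iff_Indep]
  have := indep_iSup_of_disjoint (fun i => (hX i).comap_le) ((iIndepFun_iff_iIndep _ _ _).1 h)
    (S := {0}) (T := range Nat.succ) (by simp)
  convert this using 1
  · simp
  · rw [MeasurableSpace.pi, MeasurableSpace.comap_iSup, iSup_range]
    simp [MeasurableSpace.comap_comp, Function.comp_def]

section FirstStep

variable {Ω : Type*} [MeasurableSpace Ω] {P : Measure Ω} {ξ : ℕ → Ω → ℤ}

lemma map_tail_eq_map (hmeas : ∀ i, Measurable (ξ i)) (hindep : iIndepFun ξ P)
    (hident : ∀ i, P.map (ξ i) = P.map (ξ 0)) :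
    P.map (fun ω i => ξ (i + 1) ω) = P.map (fun ω i => ξ i ω) := by
  rw [hindep.map_fun_eq_infinitePi_map hmeas,
    (hindep.precomp Nat.succ_injective).map_fun_eq_infinitePi_map fun i => hmeas _]
  simp_rw [hident]

lemma measure_hitsBeforeZero_eq_lintegral [IsProbabilityMeasure P]
    (hmeas : ∀ i, Measurable (ξ i)) (hindep : iIndepFun ξ P)
    (hident : ∀ i, P.map (ξ i) = P.map (ξ 0)) {k j : ℤ} (h0 : j ≠ 0) (hk : j ≠ k) :
    P (hitsBeforeZero ξ k j) = ∫⁻ a, P (hitsBeforeZero ξ k (j + a)) ∂P.map (ξ 0) := by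
  set X : Ω → ℕ → ℤ := fun ω i => ξ i ω
  set T : Ω → ℕ → ℤ := fun ω i => ξ (i + 1) ω
  have hX : Measurable X := measurable_pi_lambda _ hmeas
  have hT : Measurable T := measurable_pi_lambda _ fun i => hmeas _
  set R : ℤ → Set (ℕ → ℤ) := hitsBeforeZero (fun i x => x i) k
  have hR : ∀ i, MeasurableSet (R i) := fun i => measurableSet_hitsBeforeZero measurable_pi_apply
  -- the event for `ξ` is the preimage under `X` of the same event for the coordinate process
  have hP : ∀ i, P (hitsBeforeZero ξ k i) = P.map X (R i) := fun i => by
    rw [Measure.map_apply hX (hR i)]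
    rfl
  have hlaw : P.map (fun ω => (ξ 0 ω, T ω)) = (P.map (ξ 0)).prod (P.map X) := by
    rw [← map_tail_eq_map hmeas hindep hident]
    exact (indepFun_iff_map_prod_eq_prod_map_map (hmeas 0).aemeasurable hT.aemeasurable).1
      (hindep.indepFun_head_tail hmeas)
  set B : Set (ℤ × (ℕ → ℤ)) := {q | q.2 ∈ R (j + q.1)}
  have hB : MeasurableSet B := measurableSet_setOfPred.2 <|
    measurable_from_prod_countable_right fun a => measurableSet_setOfPred.1 (hR (j + a))
  calc P (hitsBeforeZero ξ k j)
      = P.map (fun ω => (ξ 0 ω, T ω)) B := by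
        rw [Measure.map_apply ((hmeas 0).prodMk hT) hB]
        congr 1
        ext ω
        exact mem_hitsBeforeZero_iff_tail h0 hk ω
    _ = ∫⁻ a, P (hitsBeforeZero ξ k (j + a)) ∂P.map (ξ 0) := by
        rw [hlaw, Measure.prod_apply hB]
        simp_rw [hP]
        rfl

lemma measureReal_hitsBeforeZero_eq [IsProbabilityMeasure P] {p : ℝ} (hp0 : 0 ≤ p)
    (hp1 : p ≤ 1) (hmeas : ∀ i, Measurable (ξ i)) (hindep : iIndepFun ξ P)
    (hlaw : ∀ i, P.map (ξ i) = stepLaw p) {k j : ℤ} (h0 : j ≠ 0) (hk : j ≠ k) :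
    P.real (hitsBeforeZero ξ k j) = p * P.real (hitsBeforeZero ξ k (j + 1))
      + (1 - p) * P.real (hitsBeforeZero ξ k (j - 1)) := by
  rw [measureReal_def,
    measure_hitsBeforeZero_eq_lintegral hmeas hindep (fun i => by rw [hlaw, hlaw]) h0 hk, hlaw,
    lintegral_stepLaw, ENNReal.toReal_add (by finiteness) (by finiteness),
    ENNReal.toReal_mul, ENNReal.toReal_mul, ENNReal.toReal_ofReal hp0,
    ENNReal.toReal_ofReal (sub_nonneg.2 hp1), ← sub_eq_add_neg]
  rfl

end FirstStep

lemma eq_mul_geom_sum_of_recurrence {p q : ℝ} (hp : p ≠ 0) (hpq : p + q = 1) {k : ℕ}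
    {g : ℕ → ℝ} (h0 : g 0 = 0) (hrec : ∀ n, n + 1 < k → g (n + 1) = p * g (n + 2) + q * g n) :
    ∀ n ≤ k, g n = g 1 * ∑ i ∈ Finset.range n, (q / p) ^ i := by
  have hdiff : ∀ n < k, g (n + 1) - g n = (q / p) ^ n * g 1 := by
    intro n
    induction n with
    | zero => simp [h0]
    | succ n ih =>
      intro hn
      rw [pow_succ, mul_right_comm, ← ih (by omega)]
      field_simp
      linear_combination -hrec n hn - g (n + 1) * hpq
  intro n hn
  rw [← sub_zero (g n), ← h0, ← Finset.sum_range_sub, Finset.mul_sum]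
  exact Finset.sum_congr rfl fun i hi =>
    (hdiff i ((Finset.mem_range.1 hi).trans_le hn)).trans (mul_comm _ _)

lemma abs_inv_geom_sum_sub_le {r : ℝ} (hr : 0 ≤ r) {k : ℕ} (hk : 1 ≤ k) :
    |(∑ i ∈ Finset.range k, r ^ i)⁻¹ - max (1 - r) 0| ≤ 1 / k := by
  set u := ∑ i ∈ Finset.range k, r ^ i
  have hu : 1 ≤ u := by
    simpa using Finset.single_le_sum (fun i _ => pow_nonneg hr i) (Finset.mem_range.2 hk)
  have hk0 : (0 : ℝ) < k := by exact_mod_cast hk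
  rcases le_or_gt 1 r with hr1 | hr1
  · have hku : (k : ℝ) ≤ u := by
      simpa using Finset.sum_le_sum fun i (_ : i ∈ Finset.range k) => one_le_pow₀ hr1
    rw [max_eq_right (by linarith), sub_zero, abs_of_pos (by positivity), one_div]
    exact inv_anti₀ hk0 hku
  · have hgeom : (1 - r) * u = 1 - r ^ k := by
      rw [mul_comm]; exact geom_sum_mul_neg r k
    have hpow : (k : ℝ) * r ^ k ≤ u := by
      simpa using Finset.sum_le_sum fun i (hi : i ∈ Finset.range k) =>
        pow_le_pow_of_le_one hr hr1.le (Finset.mem_range.1 hi).le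
    have hdiff : u⁻¹ - (1 - r) = r ^ k / u := by
      field_simp
      linarith
    rw [max_eq_left (by linarith), hdiff, abs_of_nonneg (by positivity),
      div_le_div_iff₀ (by linarith) hk0]
    linarith

/-- Let `b, d > 0` and let `k ≥ 1` be an integer.  For the random walk with i.i.d. `±1`
steps with step-up probability `p = b/(b+d)` started at `1`, one has
`| P_1[τ_k < τ_0] − max (b − d) 0 / b | ≤ 1/k`. -/
theorem stmt2 {Ω : Type*} [MeasurableSpace Ω] (P : Measure Ω) [IsProbabilityMeasure P]
    (b d : ℝ) (hb : 0 < b) (hd : 0 < d)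
    (k : ℕ) (hk : 1 ≤ k)
    (ξ : ℕ → Ω → ℤ) (hmeas : ∀ i, Measurable (ξ i))
    (hindep : iIndepFun ξ P)
    (hup : ∀ i, P {ω | ξ i ω = 1} = ENNReal.ofReal (b / (b + d)))
    (hdown : ∀ i, P {ω | ξ i ω = -1} = ENNReal.ofReal (1 - b / (b + d))) :
    |(P {ω | hitTime 1 ξ (k : ℤ) ω < hitTime 1 ξ 0 ω}).toReal - max (b - d) 0 / b|
      ≤ 1 / k := by
  set p := b / (b + d)
  have hp0 : 0 < p := by positivity
  have hp1 : p ≤ 1 := (div_le_one (by positivity)).2 (by linarith)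
  have hlaw i : P.map (ξ i) = stepLaw p := map_eq_stepLaw (hmeas i) (hup i) (hdown i)
  set g : ℕ → ℝ := fun n => P.real (hitsBeforeZero ξ k n)
  have hrec n (hn : n + 1 < k) : g (n + 1) = p * g (n + 2) + (1 - p) * g n := by
    have := measureReal_hitsBeforeZero_eq hp0.le hp1 hmeas hindep hlaw (k := k)
      (j := (n + 1 : ℕ)) (by omega) (by omega)
    simpa [g, add_assoc] using this
  have hgk : g k = 1 := by
    simp [g, hitsBeforeZero_self (Nat.cast_ne_zero.2 (by omega : k ≠ 0))]
  have hsol :=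
    eq_mul_geom_sum_of_recurrence hp0.ne' (add_sub_cancel p 1) (by simp [g]) hrec k le_rfl
  have hratio : (1 - p) / p = d / b := by
    simp only [p]
    field_simp
    ring
  have hmax : max (b - d) 0 / b = max (1 - d / b) 0 := by
    rw [← max_div_div_right hb.le, sub_div, div_self hb.ne', zero_div]
  rw [hgk, hratio] at hsol
  change |g 1 - _| ≤ _
  rw [hmax, eq_inv_of_mul_eq_one_left hsol.symm]
  exact abs_inv_geom_sum_sub_le (by positivity) hk
end

section
/- Let b, d > 0 with b ≠ d, let k ≥ 2 be an integer, and set ρ = d/b. Define, for 0 ≤ n ≤ k, e_n = (1/(b−d))·[ Σ_{j=1}^{k} (1/j)·((ρ^{k−j} − 1)·(1 − ρ^n))/(ρ^k − 1) + Σ_{j=1}^{n} (1/j)·(ρ^{n−j} − 1) ]. Then e_0 = e_k = 0; for all 1 ≤ n ≤ k−1 one has n·( b·(e_{n+1} − e_n) + d·(e_{n−1} − e_n) ) = −1; (e_n) is the unique sequence with these properties; and 0 ≤ e_1 ≤ (1 + ln k)/b. -/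
/-- Auxiliary sum: `Ssum ρ n = Σ_{j=1}^n (1/j)(ρ^{n-j} − 1)`. -/
noncomputable def Ssum (ρ : ℝ) (n : ℕ) : ℝ :=
  ∑ j ∈ Finset.Icc 1 n, (1 / (j : ℝ)) * (ρ ^ (n - j) - 1)

/-- Auxiliary sum: `Gsum ρ m = Σ_{j=1}^m (1/j)ρ^{m-j}`. -/
noncomputable def Gsum (ρ : ℝ) (m : ℕ) : ℝ :=
  ∑ j ∈ Finset.Icc 1 m, (1 / (j : ℝ)) * ρ ^ (m - j)

lemma Gsum_succ (ρ : ℝ) (m : ℕ) :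
    Gsum ρ (m + 1) = ρ * Gsum ρ m + 1 / ((m : ℝ) + 1) := by
  unfold Gsum
  have hcongr : ∑ j ∈ Finset.Icc 1 m, (1 / (j : ℝ)) * ρ ^ (m + 1 - j)
      = ∑ j ∈ Finset.Icc 1 m, ρ * ((1 / (j : ℝ)) * ρ ^ (m - j)) := by
    refine Finset.sum_congr rfl fun j hj => ?_
    have hjm : j ≤ m := (Finset.mem_Icc.mp hj).2
    rw [show m + 1 - j = (m - j) + 1 by omega, pow_succ]
    ring
  rw [← Finset.insert_Icc_right_eq_Icc_add_one (by omega : 1 ≤ m + 1),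
    Finset.sum_insert (by simp [Finset.mem_Icc]), Nat.sub_self, pow_zero, mul_one,
    Finset.mul_sum, hcongr]
  push_cast
  ring

lemma Ssum_succ (ρ : ℝ) (m : ℕ) :
    Ssum ρ (m + 1) = Ssum ρ m + (ρ - 1) * Gsum ρ m := by
  unfold Ssum Gsum
  have hcongr : ∑ j ∈ Finset.Icc 1 m, (1 / (j : ℝ)) * (ρ ^ (m + 1 - j) - 1)
      = ∑ j ∈ Finset.Icc 1 m,
          ((1 / (j : ℝ)) * (ρ ^ (m - j) - 1) + (ρ - 1) * ((1 / (j : ℝ)) * ρ ^ (m - j))) := by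
    refine Finset.sum_congr rfl fun j hj => ?_
    have hjm : j ≤ m := (Finset.mem_Icc.mp hj).2
    rw [show m + 1 - j = (m - j) + 1 by omega, pow_succ]
    ring
  rw [← Finset.insert_Icc_right_eq_Icc_add_one (by omega : 1 ≤ m + 1),
    Finset.sum_insert (by simp [Finset.mem_Icc]), Nat.sub_self, pow_zero, sub_self,
    mul_zero, zero_add, hcongr, Finset.sum_add_distrib, ← Finset.mul_sum]

lemma e_formula (b d ρ : ℝ) (k n : ℕ) :
    (1 / (b - d)) *
        ((∑ j ∈ Finset.Icc 1 k,
            (1 / (j : ℝ)) * ((ρ ^ (k - j) - 1) * (1 - ρ ^ n)) / (ρ ^ k - 1)) +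
          ∑ j ∈ Finset.Icc 1 n, (1 / (j : ℝ)) * (ρ ^ (n - j) - 1))
      = (1 / (b - d)) * (Ssum ρ k * ((1 - ρ ^ n) / (ρ ^ k - 1)) + Ssum ρ n) := by
  unfold Ssum
  congr 1
  congr 1
  rw [Finset.sum_mul]
  exact Finset.sum_congr rfl fun j _ => by ring

set_option maxHeartbeats 1000000 in
/-- Let `b, d > 0` with `b ≠ d`, let `k ≥ 2` be an integer, and set `ρ = d/b`.  Define, for
`0 ≤ n ≤ k`,
`e n = (1/(b−d))·[ Σ_{j=1}^{k} (1/j)·((ρ^{k−j} − 1)·(1 − ρ^n))/(ρ^k − 1)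
        + Σ_{j=1}^{n} (1/j)·(ρ^{n−j} − 1) ]`.
Then `e 0 = e k = 0`; for all `1 ≤ n ≤ k−1` one has
`n·( b·(e (n+1) − e n) + d·(e (n−1) − e n) ) = −1`; `(e n)` is the unique sequence with
these properties; and `0 ≤ e 1 ≤ (1 + ln k)/b`. -/
theorem stmt3 (b d : ℝ) (hb : 0 < b) (hd : 0 < d) (hbd : b ≠ d)
    (k : ℕ) (hk : 2 ≤ k) :
    let ρ : ℝ := d / b
    let e : ℕ → ℝ := fun n =>
      (1 / (b - d)) *
        ((∑ j ∈ Finset.Icc 1 k,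
            (1 / (j : ℝ)) * ((ρ ^ (k - j) - 1) * (1 - ρ ^ n)) / (ρ ^ k - 1)) +
          ∑ j ∈ Finset.Icc 1 n, (1 / (j : ℝ)) * (ρ ^ (n - j) - 1))
    (e 0 = 0 ∧ e k = 0 ∧
      (∀ n : ℕ, 1 ≤ n → n + 1 ≤ k →
        (n : ℝ) * (b * (e (n + 1) - e n) + d * (e (n - 1) - e n)) = -1)) ∧
    (∀ f : ℕ → ℝ, f 0 = 0 → f k = 0 →
      (∀ n : ℕ, 1 ≤ n → n + 1 ≤ k →
        (n : ℝ) * (b * (f (n + 1) - f n) + d * (f (n - 1) - f n)) = -1) →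
      ∀ n ≤ k, f n = e n) ∧
    (0 ≤ e 1 ∧ e 1 ≤ (1 + Real.log k) / b) := by
  intro ρ e
  have hρdef : ρ = d / b := rfl
  have he2 : ∀ n : ℕ, e n
      = (1 / (b - d)) * (Ssum ρ k * ((1 - ρ ^ n) / (ρ ^ k - 1)) + Ssum ρ n) :=
    fun n => e_formula b d ρ k n
  clear_value ρ e
  have hb0 : b ≠ 0 := ne_of_gt hb
  have hρ0 : 0 < ρ := hρdef ▸ div_pos hd hb
  have hdρ : d = ρ * b := by rw [hρdef]; field_simp
  have hρ1 : ρ ≠ 1 := by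
    intro h
    rw [hρdef] at h
    exact hbd ((div_eq_one_iff_eq hb0).mp h).symm
  have hbd0 : b - d ≠ 0 := sub_ne_zero.mpr hbd
  have hρk : ρ ^ k - 1 ≠ 0 := by
    rcases lt_or_gt_of_ne hρ1 with h | h
    · have : ρ ^ k < 1 := pow_lt_one₀ hρ0.le h (by omega)
      linarith
    · have : 1 < ρ ^ k := one_lt_pow₀ h (by omega)
      linarith
  -- boundary values
  have he0 : e 0 = 0 := by
    rw [he2 0]
    simp [Ssum]
  have hek : e k = 0 := by
    rw [he2 k]
    have h1 : (1 - ρ ^ k) / (ρ ^ k - 1) = -1 := by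
      rw [div_eq_iff hρk]; ring
    rw [h1]; ring
  -- the recurrence
  have herec : ∀ n : ℕ, 1 ≤ n → n + 1 ≤ k →
      (n : ℝ) * (b * (e (n + 1) - e n) + d * (e (n - 1) - e n)) = -1 := by
    intro n hn1 hnk
    obtain ⟨m, rfl⟩ : ∃ m, n = m + 1 := ⟨n - 1, by omega⟩
    have hsub : m + 1 - 1 = m := rfl
    rw [hsub, he2 (m + 1 + 1), he2 (m + 1), he2 m,
      show m + 1 + 1 = m + 2 from rfl,
      show Ssum ρ (m + 2) = Ssum ρ (m + 1) + (ρ - 1) * Gsum ρ (m + 1) from Ssum_succ ρ (m + 1),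
      Ssum_succ ρ m, Gsum_succ ρ m, hdρ]
    generalize Ssum ρ k = S
    generalize Ssum ρ m = T
    generalize Gsum ρ m = G
    have hbρ : b - ρ * b ≠ 0 := by rw [← hdρ]; exact hbd0
    have hm1 : ((m : ℝ)) + 1 ≠ 0 := by positivity
    push_cast
    field_simp
    ring
  -- bounds on e 1
  have hT1 : Ssum ρ 1 = 0 := by simp [Ssum]
  have hr : ∀ j ∈ Finset.Icc 1 k,
      0 ≤ (ρ ^ (k - j) - 1) / (ρ ^ k - 1) ∧ (ρ ^ (k - j) - 1) / (ρ ^ k - 1) ≤ 1 := by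
    intro j hj
    obtain ⟨hj1, hjk⟩ := Finset.mem_Icc.mp hj
    rcases lt_or_gt_of_ne hρ1 with h | h
    · have hnum : ρ ^ (k - j) ≤ 1 := pow_le_one₀ hρ0.le h.le
      have hden : ρ ^ k < 1 := pow_lt_one₀ hρ0.le h (by omega)
      have hmono : ρ ^ k ≤ ρ ^ (k - j) := pow_le_pow_of_le_one hρ0.le h.le (by omega)
      constructor
      · exact div_nonneg_iff.mpr (Or.inr ⟨by linarith, by linarith⟩)
      · rw [div_le_one_iff]
        right; right
        exact ⟨by linarith, by linarith⟩
    · have hden : 1 < ρ ^ k := one_lt_pow₀ h (by omega)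
      have hmono : ρ ^ (k - j) ≤ ρ ^ k := pow_le_pow_right₀ h.le (by omega)
      have hnum : (1 : ℝ) ≤ ρ ^ (k - j) := one_le_pow₀ h.le
      constructor
      · exact div_nonneg (by linarith) (by linarith)
      · rw [div_le_one (by linarith)]
        linarith
  have hRS : ∑ j ∈ Finset.Icc 1 k, (1 / (j : ℝ)) * ((ρ ^ (k - j) - 1) / (ρ ^ k - 1))
      = Ssum ρ k / (ρ ^ k - 1) := by
    unfold Ssum
    rw [Finset.sum_div]
    exact Finset.sum_congr rfl fun j _ => by ring
  have he1 : e 1 = (∑ j ∈ Finset.Icc 1 k,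
      (1 / (j : ℝ)) * ((ρ ^ (k - j) - 1) / (ρ ^ k - 1))) / b := by
    rw [he2 1, hT1, add_zero, pow_one, hRS]
    have h1ρ : 1 - ρ = (b - d) / b := by rw [hρdef]; field_simp
    rw [h1ρ]
    generalize Ssum ρ k = S
    calc 1 / (b - d) * (S * ((b - d) / b / (ρ ^ k - 1)))
        = S / (ρ ^ k - 1) / b * ((b - d) * (1 / (b - d))) := by ring
      _ = S / (ρ ^ k - 1) / b := by rw [mul_one_div, div_self hbd0, mul_one]
  have hS0 : 0 ≤ ∑ j ∈ Finset.Icc 1 k, (1 / (j : ℝ)) * ((ρ ^ (k - j) - 1) / (ρ ^ k - 1)) :=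
    Finset.sum_nonneg fun j hj => mul_nonneg (by positivity) (hr j hj).1
  have hSle : (∑ j ∈ Finset.Icc 1 k, (1 / (j : ℝ)) * ((ρ ^ (k - j) - 1) / (ρ ^ k - 1)))
      ≤ ∑ j ∈ Finset.Icc 1 k, (1 / (j : ℝ)) :=
    Finset.sum_le_sum fun j hj => mul_le_of_le_one_right (by positivity) (hr j hj).2
  have hH : (∑ j ∈ Finset.Icc 1 k, (1 / (j : ℝ))) ≤ 1 + Real.log k := by
    have h1 := harmonic_le_one_add_log k
    have h2 : ((harmonic k : ℚ) : ℝ) = ∑ j ∈ Finset.Icc 1 k, (1 / (j : ℝ)) := by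
      rw [harmonic_eq_sum_Icc]
      push_cast
      simp [one_div]
    rw [h2] at h1
    exact h1
  have hbound : 0 ≤ e 1 ∧ e 1 ≤ (1 + Real.log k) / b := by
    rw [he1]
    exact ⟨div_nonneg hS0 hb.le, (div_le_div_iff_of_pos_right hb).mpr (le_trans hSle hH)⟩
  refine ⟨⟨he0, hek, herec⟩, ?_, hbound⟩
  -- uniqueness
  intro f hf0 hfk hfrec
  have hstep : ∀ m : ℕ, m + 1 ≤ k →
      (f (m + 1) - e (m + 1)) - (f m - e m) = ρ ^ m * (f 1 - e 1) := by
    intro m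
    induction m with
    | zero => intro _; rw [hf0, he0, pow_zero]; ring
    | succ p ih =>
      intro hpk
      have hih := ih (by omega)
      have hf := hfrec (p + 1) (by omega) (by omega)
      have he' := herec (p + 1) (by omega) (by omega)
      have hsub : p + 1 - 1 = p := rfl
      rw [hsub] at hf he'
      have hcast : ((p : ℝ) + 1) ≠ 0 := by positivity
      have hkey : b * ((f (p + 2) - e (p + 2)) - (f (p + 1) - e (p + 1)))
          + d * ((f p - e p) - (f (p + 1) - e (p + 1))) = 0 := by
        have h3 : ((p : ℝ) + 1) * (b * (f (p + 1 + 1) - f (p + 1)) + d * (f p - f (p + 1)))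
            = ((p : ℝ) + 1) * (b * (e (p + 1 + 1) - e (p + 1)) + d * (e p - e (p + 1))) := by
          push_cast at hf he'
          rw [hf, he']
        have h4 := mul_left_cancel₀ hcast h3
        have hpp : p + 1 + 1 = p + 2 := rfl
        rw [hpp] at h4
        linarith
      have hquot : (f (p + 2) - e (p + 2)) - (f (p + 1) - e (p + 1))
          = ρ * ((f (p + 1) - e (p + 1)) - (f p - e p)) := by
        rw [hρdef, div_mul_eq_mul_div, eq_div_iff hb0]
        linear_combination hkey
      rw [show p + 1 + 1 = p + 2 from rfl, hquot, hih]
      ring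
  have hsum : ∀ n : ℕ, n ≤ k →
      f n - e n = (∑ i ∈ Finset.range n, ρ ^ i) * (f 1 - e 1) := by
    intro n
    induction n with
    | zero => intro _; rw [hf0, he0]; simp
    | succ p ih =>
      intro hpk
      have h1 := ih (by omega)
      have h2 := hstep p (by omega)
      rw [Finset.sum_range_succ]
      linear_combination h1 + h2
  have hu1 : f 1 - e 1 = 0 := by
    have hK := hsum k le_rfl
    rw [hfk, hek, sub_zero] at hK
    have hpos : 0 < ∑ i ∈ Finset.range k, ρ ^ i :=
      Finset.sum_pos (fun i _ => pow_pos hρ0 i) (Finset.nonempty_range_iff.mpr (by omega))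
    rcases mul_eq_zero.mp hK.symm with h | h
    · exact absurd h (ne_of_gt hpos)
    · exact h
  intro n hn
  have := hsum n hn
  rw [hu1, mul_zero] at this
  linarith
end

section
/- Fix ε > 0 and C > 0. For each K with C·σ_K < 1/2, let S^{(K)} be the random walk with step-up probability p_K = 1/2 + C·σ_K, set m_K = ⌈(ε/2)·σ_K·K⌉, and let i ≥ 1 be an integer. Then lim_{K→∞} e^{K^α} · P_{i·m_K}[ τ_{(i−1)·m_K} < τ_{(i+1)·m_K} ] = 0. -/
open MeasureTheory ProbabilityTheory Filter Set

/-!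
On the event `τ_{(i-1)m} < τ_{(i+1)m}` the walk started at `j = i m` reaches `j - m`, so it
suffices to bound the probability that a walk with upward drift `δ = C σ` ever falls `m` below
its start. Chernoff's bound at `θ = δ` gives `P(S_n ≤ -m) ≤ e^{-δm} (1 - δ²)^n`, and summing over
`n` gives `e^{-δm} / δ²`. Since `m ≥ (ε/2) σ K`, the exponent is
`δ m ≥ (Cε/2) σ² K = (Cε/2) (K^{1/2-α} σ)² K^{2α}`, eventually at least `2 K^{2α}`, while
`δ² ≥ C² / K`; hence `e^{K^α}` times the probability is at most `K e^{-K^{2α}} / C² → 0`.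
-/

open Real Topology Finset

section PlusMinusOneSteps

variable {Ω : Type*} [MeasurableSpace Ω] {P : Measure Ω} {p : ℝ}

lemma ae_eq_one_or_eq_neg_one [IsProbabilityMeasure P] {X : Ω → ℤ} (hX : Measurable X)
    (hp0 : 0 ≤ p) (hp1 : p ≤ 1) (h1 : P {ω | X ω = 1} = ENNReal.ofReal p)
    (h2 : P {ω | X ω = -1} = ENNReal.ofReal (1 - p)) :
    ∀ᵐ ω ∂P, X ω = 1 ∨ X ω = -1 := by
  have hdisj : Disjoint {ω | X ω = 1} {ω | X ω = -1} :=
    Set.disjoint_left.2 fun ω h1 h2 => by simp_all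
  have hs1 : MeasurableSet {ω | X ω = 1} := hX (measurableSet_singleton 1)
  have hs2 : MeasurableSet {ω | X ω = -1} := hX (measurableSet_singleton (-1))
  refine (ae_mem_iff_measure_eq (hs1.union hs2).nullMeasurableSet).2 ?_
  rw [measure_union hdisj hs2, h1, h2, ← ENNReal.ofReal_add hp0 (by linarith), measure_univ]
  norm_num

lemma mgf_intCast_eq [IsProbabilityMeasure P] {X : Ω → ℤ} (hX : Measurable X)
    (hp0 : 0 ≤ p) (hp1 : p ≤ 1) (h1 : P {ω | X ω = 1} = ENNReal.ofReal p)
    (h2 : P {ω | X ω = -1} = ENNReal.ofReal (1 - p)) (t : ℝ) :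
    mgf (fun ω => (X ω : ℝ)) P t = p * exp t + (1 - p) * exp (-t) := by
  have hs1 : MeasurableSet {ω | X ω = 1} := hX (measurableSet_singleton 1)
  have hs2 : MeasurableSet {ω | X ω = -1} := hX (measurableSet_singleton (-1))
  have hae : (fun ω => exp (t * X ω)) =ᵐ[P] fun ω =>
      {ω | X ω = 1}.indicator (fun _ => exp t) ω + {ω | X ω = -1}.indicator (fun _ => exp (-t)) ω := by
    filter_upwards [ae_eq_one_or_eq_neg_one hX hp0 hp1 h1 h2] with ω hω
    rcases hω with h | h <;> simp [h]
  rw [mgf, integral_congr_ae hae, integral_add ((integrable_const _).indicator hs1)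
      ((integrable_const _).indicator hs2), integral_indicator_const _ hs1,
    integral_indicator_const _ hs2, measureReal_def, measureReal_def, h1, h2,
    ENNReal.toReal_ofReal hp0, ENNReal.toReal_ofReal (by linarith), smul_eq_mul, smul_eq_mul]

variable {ξ : ℕ → Ω → ℤ}

lemma measureReal_sum_le_neg_le (hmeas : ∀ n, Measurable (ξ n)) (hindep : iIndepFun ξ P)
    (hp0 : 0 ≤ p) (hp1 : p ≤ 1) (h1 : ∀ n, P {ω | ξ n ω = 1} = ENNReal.ofReal p)
    (h2 : ∀ n, P {ω | ξ n ω = -1} = ENNReal.ofReal (1 - p)) {θ : ℝ} (hθ : 0 ≤ θ) (x : ℝ)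
    (n : ℕ) :
    P.real {ω | (∑ k ∈ range n, ξ k ω : ℝ) ≤ -x}
      ≤ exp (-(θ * x)) * (p * exp (-θ) + (1 - p) * exp θ) ^ n := by
  have := hindep.isProbabilityMeasure
  set Y : ℕ → Ω → ℝ := fun k ω => ξ k ω with hY
  have hYmeas : ∀ k, Measurable (Y k) := fun k => measurable_from_top.comp (hmeas k)
  have hYindep : iIndepFun Y P := hindep.comp _ fun _ => measurable_from_top
  have hint : Integrable (fun ω => exp (-θ * (∑ k ∈ range n, Y k) ω)) P := by
    refine hYindep.integrable_exp_mul_sum hYmeas fun k _ =>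
      integrable_exp_mul_of_mem_Icc (a := -1) (b := 1) (hYmeas k).aemeasurable ?_
    filter_upwards [ae_eq_one_or_eq_neg_one (hmeas k) hp0 hp1 (h1 k) (h2 k)] with ω hω
    rcases hω with h | h <;> simp [hY, h]
  have hmgf : mgf (∑ k ∈ range n, Y k) P (-θ) = (p * exp (-θ) + (1 - p) * exp θ) ^ n := by
    rw [hYindep.mgf_sum hYmeas, prod_congr rfl fun k _ => ?_, prod_const, card_range]
    simpa using mgf_intCast_eq (hmeas k) hp0 hp1 (h1 k) (h2 k) (-θ)
  calc P.real {ω | (∑ k ∈ range n, ξ k ω : ℝ) ≤ -x}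
      = P.real {ω | (∑ k ∈ range n, Y k) ω ≤ -x} := by simp [hY]
    _ ≤ exp (-(-θ) * -x) * mgf (∑ k ∈ range n, Y k) P (-θ) :=
      measure_le_le_exp_mul_mgf _ (by linarith) hint
    _ = exp (-(θ * x)) * (p * exp (-θ) + (1 - p) * exp θ) ^ n := by rw [hmgf]; ring_nf

lemma measure_exists_sum_eq_neg_le (hmeas : ∀ n, Measurable (ξ n)) (hindep : iIndepFun ξ P)
    (hp0 : 0 ≤ p) (hp1 : p ≤ 1) (h1 : ∀ n, P {ω | ξ n ω = 1} = ENNReal.ofReal p)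
    (h2 : ∀ n, P {ω | ξ n ω = -1} = ENNReal.ofReal (1 - p)) {θ : ℝ} (hθ : 0 ≤ θ) (M : ℕ)
    {lam : ℝ} (hlam0 : 0 ≤ lam) (hlam1 : lam < 1)
    (hlam : p * exp (-θ) + (1 - p) * exp θ ≤ lam) :
    P {ω | ∃ n, ∑ k ∈ range n, ξ k ω = -(M : ℤ)} ≤ ENNReal.ofReal (exp (-(θ * M)) / (1 - lam)) := by
  have := hindep.isProbabilityMeasure
  have hsub : {ω | ∃ n, ∑ k ∈ range n, ξ k ω = -(M : ℤ)}
      ⊆ ⋃ n, {ω | (∑ k ∈ range n, ξ k ω : ℝ) ≤ -M} := by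
    rintro ω ⟨n, hn⟩
    exact mem_iUnion.2 ⟨n, by simp [← Int.cast_sum, hn]⟩
  have hmgf_nonneg : 0 ≤ p * exp (-θ) + (1 - p) * exp θ := by
    have : 0 ≤ 1 - p := by linarith
    positivity
  have hsummable := (summable_geometric_of_lt_one hlam0 hlam1).mul_left (exp (-(θ * M)))
  calc P {ω | ∃ n, ∑ k ∈ range n, ξ k ω = -(M : ℤ)}
      ≤ ∑' n, P {ω | (∑ k ∈ range n, ξ k ω : ℝ) ≤ -M} :=
        (measure_mono hsub).trans (measure_iUnion_le _)
    _ ≤ ∑' n, ENNReal.ofReal (exp (-(θ * M)) * lam ^ n) := by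
        refine ENNReal.tsum_le_tsum fun n => ?_
        rw [← ofReal_measureReal]
        refine ENNReal.ofReal_le_ofReal
          ((measureReal_sum_le_neg_le hmeas hindep hp0 hp1 h1 h2 hθ M n).trans ?_)
        gcongr
    _ = ENNReal.ofReal (∑' n, exp (-(θ * M)) * lam ^ n) :=
        (ENNReal.ofReal_tsum_of_nonneg (fun n => by positivity) hsummable).symm
    _ = ENNReal.ofReal (exp (-(θ * M)) / (1 - lam)) := by
        rw [tsum_mul_left, tsum_geometric_of_lt_one hlam0 hlam1, div_eq_mul_inv]

lemma biased_mgf_le {δ : ℝ} (h0 : 0 ≤ δ) (h1 : δ ≤ 1 / 2) :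
    (1 / 2 + δ) * exp (-δ) + (1 - (1 / 2 + δ)) * exp δ ≤ 1 - δ ^ 2 := by
  have ha : exp (-δ) * (1 + δ) ≤ 1 := by
    calc exp (-δ) * (1 + δ) ≤ exp (-δ) * exp δ := by gcongr; linarith [add_one_le_exp δ]
      _ = 1 := by rw [← exp_add, neg_add_cancel, exp_zero]
  have hb : exp δ * (1 - δ) ≤ 1 := by
    calc exp δ * (1 - δ) ≤ exp δ * exp (-δ) := by gcongr; linarith [add_one_le_exp (-δ)]
      _ = 1 := by rw [← exp_add, add_neg_cancel, exp_zero]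
  -- `ha`, `hb` say `e^{∓δ} ≤ 1 / (1 ± δ)`; multiplying through by `1 - δ²` reduces the claim
  -- to `1 - 2δ² ≤ (1 - δ²)²`
  have H : ((1 / 2 + δ) * exp (-δ) + (1 - (1 / 2 + δ)) * exp δ) * (1 - δ ^ 2)
      ≤ 1 - 2 * δ ^ 2 := by
    nlinarith [mul_le_mul_of_nonneg_left ha (by nlinarith : (0 : ℝ) ≤ (1 / 2 + δ) * (1 - δ)),
      mul_le_mul_of_nonneg_left hb (by nlinarith : (0 : ℝ) ≤ (1 / 2 - δ) * (1 + δ))]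
  have hpos : 0 < 1 - δ ^ 2 := by nlinarith
  exact le_of_mul_le_mul_right (H.trans (by nlinarith [sq_nonneg δ])) hpos

lemma measure_exists_walk_eq_sub_le (hmeas : ∀ n, Measurable (ξ n)) (hindep : iIndepFun ξ P)
    {δ : ℝ} (hδ0 : 0 < δ) (hδ1 : δ ≤ 1 / 2)
    (h1 : ∀ n, P {ω | ξ n ω = 1} = ENNReal.ofReal (1 / 2 + δ))
    (h2 : ∀ n, P {ω | ξ n ω = -1} = ENNReal.ofReal (1 - (1 / 2 + δ))) (j : ℤ) (M : ℕ) :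
    P {ω | ∃ n, walk j ξ n ω = j - M} ≤ ENNReal.ofReal (exp (-(δ * M)) / δ ^ 2) := by
  have hevent : {ω | ∃ n, walk j ξ n ω = j - M} = {ω | ∃ n, ∑ k ∈ range n, ξ k ω = -(M : ℤ)} := by
    ext ω
    exact exists_congr fun n => by simp only [walk]; omega
  rw [hevent]
  convert measure_exists_sum_eq_neg_le hmeas hindep (by linarith) (by linarith) h1 h2 hδ0.le M
    (by nlinarith) (by nlinarith) (biased_mgf_le hδ0.le hδ1) using 3
  ring

end PlusMinusOneSteps

lemma exists_walk_eq_of_hitTime_ne_top {Ω : Type*} {j m : ℤ} {ξ : ℕ → Ω → ℤ} {ω : Ω}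
    (h : hitTime j ξ m ω ≠ ⊤) : ∃ n, walk j ξ n ω = m := by
  by_contra! hne
  exact h (by simp [hitTime, hne])

lemma tendsto_mul_exp_neg_rpow_atTop {β : ℝ} (hβ : 0 < β) :
    Tendsto (fun x : ℝ => x * exp (-x ^ β)) atTop (𝓝 0) := by
  refine ((tendsto_rpow_mul_exp_neg_mul_atTop_nhds_zero β⁻¹ 1 one_pos).comp
    (tendsto_rpow_atTop hβ)).congr' ?_
  filter_upwards [eventually_ge_atTop 0] with x hx
  simp [← rpow_mul hx, hβ.ne']

lemma exp_rpow_mul_exp_neg_div_sq_le {α : ℝ} (hα : 0 ≤ α) {K : ℕ} (hK : 1 ≤ K) {s C ε : ℝ}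
    (hs : 0 < s) (hC : 0 < C) (hε : 0 < ε)
    (hT : max 1 (4 / (C * ε)) ≤ ((K : ℝ) ^ ((1 : ℝ) / 2 - α) * s) ^ 2) :
    exp ((K : ℝ) ^ α) * (exp (-(C * s * ⌈(ε / 2) * s * K⌉₊)) / (C * s) ^ 2)
      ≤ K * exp (-(K : ℝ) ^ (2 * α)) / C ^ 2 := by
  set T2 := ((K : ℝ) ^ ((1 : ℝ) / 2 - α) * s) ^ 2
  have hK1 : (1 : ℝ) ≤ K := by exact_mod_cast hK
  have hKpos : (0 : ℝ) < K := by linarith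
  have hid : s ^ 2 * K = T2 * (K : ℝ) ^ (2 * α) := by
    have hK : ((K : ℝ) ^ ((1 : ℝ) / 2 - α)) ^ 2 * (K : ℝ) ^ (2 * α) = K := by
      rw [← rpow_mul_natCast hKpos.le, ← rpow_add hKpos]
      convert rpow_one (K : ℝ) using 2
      push_cast
      ring
    linear_combination -s ^ 2 * hK
  have hK2α : 1 ≤ (K : ℝ) ^ (2 * α) := one_le_rpow hK1 (by positivity)
  have hKα : (K : ℝ) ^ α ≤ (K : ℝ) ^ (2 * α) := rpow_le_rpow_of_exponent_le hK1 (by linarith)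
  have hT1 : 1 ≤ T2 := (le_max_left _ _).trans hT
  have hTε : 2 ≤ C * ε / 2 * T2 := by
    have := (le_max_right _ _).trans hT
    rw [div_le_iff₀ (by positivity)] at this
    linarith
  have hdrift : 2 * (K : ℝ) ^ (2 * α) ≤ C * s * ⌈(ε / 2) * s * K⌉₊ :=
    calc 2 * (K : ℝ) ^ (2 * α) ≤ C * ε / 2 * T2 * (K : ℝ) ^ (2 * α) := by gcongr
      _ = C * s * ((ε / 2) * s * K) := by rw [mul_assoc, ← hid]; ring
      _ ≤ C * s * ⌈(ε / 2) * s * K⌉₊ := by gcongr; exact Nat.le_ceil _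
  have hvar : C ^ 2 / K ≤ (C * s) ^ 2 := by
    rw [div_le_iff₀ hKpos, mul_pow, mul_assoc, hid]
    nlinarith [mul_le_mul hT1 hK2α zero_le_one (by linarith), sq_nonneg C]
  calc exp ((K : ℝ) ^ α) * (exp (-(C * s * ⌈(ε / 2) * s * K⌉₊)) / (C * s) ^ 2)
      = exp ((K : ℝ) ^ α - C * s * ⌈(ε / 2) * s * K⌉₊) / (C * s) ^ 2 := by
        rw [sub_eq_add_neg, exp_add, mul_div_assoc]
    _ ≤ exp (-(K : ℝ) ^ (2 * α)) / (C ^ 2 / K) := by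
        gcongr
        linarith
    _ = K * exp (-(K : ℝ) ^ (2 * α)) / C ^ 2 := by field_simp

lemma tendsto_exp_rpow_mul_exp_neg_div_sq {α : ℝ} (hα : 0 < α) {σ : ℕ → ℝ}
    (hσpos : ∀ K, 0 < σ K)
    (hσK : Tendsto (fun K : ℕ => (K : ℝ) ^ ((1 : ℝ) / 2 - α) * σ K) atTop atTop)
    {ε C : ℝ} (hε : 0 < ε) (hC : 0 < C) :
    Tendsto (fun K : ℕ => exp ((K : ℝ) ^ α) *
      (exp (-(C * σ K * ⌈(ε / 2) * σ K * K⌉₊)) / (C * σ K) ^ 2)) atTop (𝓝 0) := by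
  have hdom : Tendsto (fun K : ℕ => K * exp (-(K : ℝ) ^ (2 * α)) / C ^ 2) atTop (𝓝 0) := by
    simpa using ((tendsto_mul_exp_neg_rpow_atTop (by positivity : 0 < 2 * α)).comp
      tendsto_natCast_atTop_atTop).div_const (C ^ 2)
  refine squeeze_zero' (Eventually.of_forall fun K => by positivity) ?_ hdom
  filter_upwards [((tendsto_pow_atTop two_ne_zero).comp hσK).eventually_ge_atTop
    (max 1 (4 / (C * ε))), eventually_ge_atTop 1] with K hT hK
  exact exp_rpow_mul_exp_neg_div_sq_le hα.le hK (hσpos K) hC hε hT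

theorem stmt7_general (α : ℝ) (hα : α ∈ Set.Ioo (0 : ℝ) (1 / 2))
    (σ : ℕ → ℝ) (hσpos : ∀ K, 0 < σ K)
    (hσ0 : Tendsto σ atTop (nhds 0))
    (hσK : Tendsto (fun K : ℕ => (K : ℝ) ^ ((1 : ℝ) / 2 - α) * σ K) atTop atTop)
    (ε C : ℝ) (hε : 0 < ε) (hC : 0 < C)
    (i : ℕ)
    (Ω : ℕ → Type*) (mΩ : ∀ K, MeasurableSpace (Ω K))
    (P : ∀ K, Measure (Ω K))
    (ξ : ∀ K, ℕ → Ω K → ℤ) (hmeas : ∀ K n, Measurable (ξ K n))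
    (hindep : ∀ K, C * σ K < 1 / 2 → iIndepFun (ξ K) (P K))
    (hup : ∀ K, C * σ K < 1 / 2 → ∀ n,
      P K {ω | ξ K n ω = 1} = ENNReal.ofReal (1 / 2 + C * σ K))
    (hdown : ∀ K, C * σ K < 1 / 2 → ∀ n,
      P K {ω | ξ K n ω = -1} = ENNReal.ofReal (1 - (1 / 2 + C * σ K))) :
    Tendsto (fun K : ℕ =>
      Real.exp ((K : ℝ) ^ α) *
        (P K {ω | hitTime ((i : ℤ) * (⌈(ε / 2) * σ K * (K : ℝ)⌉₊ : ℤ)) (ξ K)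
              (((i : ℤ) - 1) * (⌈(ε / 2) * σ K * (K : ℝ)⌉₊ : ℤ)) ω
            < hitTime ((i : ℤ) * (⌈(ε / 2) * σ K * (K : ℝ)⌉₊ : ℤ)) (ξ K)
                (((i : ℤ) + 1) * (⌈(ε / 2) * σ K * (K : ℝ)⌉₊ : ℤ)) ω}).toReal)
      atTop (nhds 0) := by
  have hdrift : ∀ᶠ K in atTop, C * σ K < 1 / 2 :=
    (hσ0.const_mul C).eventually_lt_const (by norm_num)
  refine squeeze_zero' (Eventually.of_forall fun K => by positivity) ?_
    (tendsto_exp_rpow_mul_exp_neg_div_sq hα.1 hσpos hσK hε hC)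
  filter_upwards [hdrift] with K hK
  gcongr
  refine ENNReal.toReal_le_of_le_ofReal (by positivity) ((measure_mono fun ω hω => ?_).trans
    (measure_exists_walk_eq_sub_le (hmeas K) (hindep K hK) (mul_pos hC (hσpos K)) hK.le
      (hup K hK) (hdown K hK) ((i : ℤ) * ⌈(ε / 2) * σ K * K⌉₊) _))
  obtain ⟨n, hn⟩ := exists_walk_eq_of_hitTime_ne_top (LT.lt.ne_top hω)
  exact ⟨n, by rw [hn]; ring⟩

/-- Fix `α ∈ (0,1/2)` and a sequence `σ_K > 0` with `σ_K → 0` and `K^{1/2−α}·σ_K → ∞`.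
Fix `ε > 0` and `C > 0`.  For each `K` with `C·σ_K < 1/2`, let `S^{(K)}` be the random
walk with i.i.d. `±1` steps with step-up probability `p_K = 1/2 + C·σ_K`, set
`m_K = ⌈(ε/2)·σ_K·K⌉`, and let `i ≥ 1` be an integer.  Then
`lim_{K→∞} e^{K^α} · P_{i·m_K}[ τ_{(i−1)·m_K} < τ_{(i+1)·m_K} ] = 0`. -/
theorem stmt7 (α : ℝ) (hα : α ∈ Set.Ioo (0 : ℝ) (1 / 2))
    (σ : ℕ → ℝ) (hσpos : ∀ K, 0 < σ K)
    (hσ0 : Tendsto σ atTop (nhds 0))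
    (hσK : Tendsto (fun K : ℕ => (K : ℝ) ^ ((1 : ℝ) / 2 - α) * σ K) atTop atTop)
    (ε C : ℝ) (hε : 0 < ε) (hC : 0 < C)
    (i : ℕ) (hi : 1 ≤ i)
    (Ω : ℕ → Type*) (mΩ : ∀ K, MeasurableSpace (Ω K))
    (P : ∀ K, Measure (Ω K)) (hP : ∀ K, IsProbabilityMeasure (P K))
    (ξ : ∀ K, ℕ → Ω K → ℤ) (hmeas : ∀ K n, Measurable (ξ K n))
    (hindep : ∀ K, C * σ K < 1 / 2 → iIndepFun (ξ K) (P K))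
    (hup : ∀ K, C * σ K < 1 / 2 → ∀ n,
      P K {ω | ξ K n ω = 1} = ENNReal.ofReal (1 / 2 + C * σ K))
    (hdown : ∀ K, C * σ K < 1 / 2 → ∀ n,
      P K {ω | ξ K n ω = -1} = ENNReal.ofReal (1 - (1 / 2 + C * σ K))) :
    Tendsto (fun K : ℕ =>
      Real.exp ((K : ℝ) ^ α) *
        (P K {ω | hitTime ((i : ℤ) * (⌈(ε / 2) * σ K * (K : ℝ)⌉₊ : ℤ)) (ξ K)
              (((i : ℤ) - 1) * (⌈(ε / 2) * σ K * (K : ℝ)⌉₊ : ℤ)) ω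
            < hitTime ((i : ℤ) * (⌈(ε / 2) * σ K * (K : ℝ)⌉₊ : ℤ)) (ξ K)
                (((i : ℤ) + 1) * (⌈(ε / 2) * σ K * (K : ℝ)⌉₊ : ℤ)) ω}).toReal)
      atTop (nhds 0) :=
  stmt7_general α hα σ hσpos hσ0 hσK ε C hε hC i Ω mΩ P ξ hmeas hindep hup hdown
end

section
/- Fix constants C₁ > 0, C₂ ≥ 0, ε > 0, and M ≥ 8·C₂/C₁. For each K ≥ 1 let (Z_n)_{n≥0} be the discrete-time Markov chain on ℕ with transition probabilities p(0,1) = 1 and, for i ≥ 1, p(i, i+1) = q_K(i) and p(i, i−1) = 1 − q_K(i), where q_K(i) = min(1, max(0, 1/2 − C₁·i/K + C₂·ε·σ_K)); let P_a denote its trajectory law started at a and τ_m = inf{n ≥ 0 : Z_n = m}. Then for every choice of natural numbers a_K with a_K ≤ (1/3)·M·ε·σ_K·K, one has lim_{K→∞} e^{K^{2α}} · P_{a_K}[ τ_{⌈M·ε·σ_K·K⌉} < τ_0 ] = 0. -/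
open MeasureTheory ProbabilityTheory Filter Set

open Classical in
/-- The Markov chain on `ℕ` with transitions `p(0,1) = 1`, `p(i, i+1) = q i`,
`p(i, i−1) = 1 − q i` for `i ≥ 1`, driven by the i.i.d. uniform-`[0,1]` random
variables `U` and started at `a`. -/
noncomputable def chain {Ω : Type*} (q : ℕ → ℝ) (U : ℕ → Ω → ℝ) (a : ℕ) :
    ℕ → Ω → ℕ
  | 0 => fun _ => a
  | n + 1 => fun ω =>
      let z := chain q U a n ω
      if z = 0 then 1 else if U n ω < q z then z + 1 else z - 1

/-- The hitting time `τ_m = inf {n ≥ 0 : Z_n = m}` (with `inf ∅ = ∞`) of the state `m`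
by the `ℕ`-valued process `Z`. -/
noncomputable def hitTimeN {Ω : Type*} (Z : ℕ → Ω → ℕ) (m : ℕ) (ω : Ω) : ℕ∞ :=
  ⨅ (n : ℕ) (_ : Z n ω = m), (n : ℕ∞)

/-!
The scale function `h i = ∑_{j<i} ∏_{k=1}^{j} (1 - q k) / q k` is harmonic for the chain away
from `0`, so `h` of the chain absorbed at `0` and `L = ⌈M ε σ_K K⌉` is a martingale, and optional
stopping gives `P_a[τ_L < τ_0] ≤ h a / h L`. Below `L` the clamping is inactive and
`q k = 1/2 - x k` with `x k = C₁ k / K - C₂ ε σ_K ≥ -C₂ ε σ_K`, so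
`(1 - q k) / q k ≥ exp (3 x k - 3 C₂ ε σ_K)`. Summing this linear drift over `j < k < L`
compares every increment `h (j+1) - h j` with `j < a` to the last one and yields
`h a / h L ≤ a · exp (1 - C₁ M² (ε σ_K)² K / 2)`; the condition `M ≥ 8 C₂ / C₁` keeps the
constant drift `C₂ ε σ_K` from eating the quadratic gain. Since `K^{1/2-α} σ_K → ∞`, the exponent
eventually exceeds `2 K^{2α}`.
-/

namespace BirthDeathChain

noncomputable def stoppedStep (q : ℕ → ℝ) (L z : ℕ) (u : ℝ) : ℕ :=
  if z = 0 ∨ z = L then z else if u < q z then z + 1 else z - 1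

noncomputable def stoppedChain {Ω : Type*} (q : ℕ → ℝ) (U : ℕ → Ω → ℝ) (a L : ℕ) :
    ℕ → Ω → ℕ
  | 0 => fun _ => a
  | n + 1 => fun ω => stoppedStep q L (stoppedChain q U a L n ω) (U n ω)

abbrev pastSigma {Ω : Type*} (U : ℕ → Ω → ℝ) (n : ℕ) : MeasurableSpace Ω :=
  ⨆ i ∈ Iio n, MeasurableSpace.comap (U i) inferInstance

section HitTime

variable {Ω : Type*} {Z : ℕ → Ω → ℕ} {m n : ℕ} {ω : Ω}

lemma hitTimeN_le (h : Z n ω = m) : hitTimeN Z m ω ≤ n :=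
  iInf₂_le n h

lemma exists_eq_of_hitTimeN_lt {t : ℕ∞} (h : hitTimeN Z m ω < t) :
    ∃ n, Z n ω = m ∧ (n : ℕ∞) < t := by
  simpa only [hitTimeN, iInf_lt_iff, exists_prop] using h

end HitTime

section StoppedChain

variable {Ω : Type*} {q : ℕ → ℝ} {U : ℕ → Ω → ℝ} {a L : ℕ}

lemma stoppedChain_le (haL : a ≤ L) (n : ℕ) (ω : Ω) : stoppedChain q U a L n ω ≤ L := by
  induction n with
  | zero => exact haL
  | succ n ih =>
    simp only [stoppedChain, stoppedStep]
    split_ifs <;> omega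

lemma monotone_setOf_stoppedChain_eq :
    Monotone fun n => {ω : Ω | stoppedChain q U a L n ω = L} :=
  monotone_nat_of_le_succ fun n ω (hω : stoppedChain q U a L n ω = L) => by
    simp [stoppedChain, stoppedStep, hω]

lemma stoppedChain_eq_chain_or_eq {n : ℕ} {ω : Ω} (h0 : ∀ k ≤ n, chain q U a k ω ≠ 0) :
    stoppedChain q U a L n ω = chain q U a n ω ∨ stoppedChain q U a L n ω = L := by
  induction n with
  | zero => exact Or.inl rfl
  | succ n ih =>
    rcases ih fun k hk => h0 k (by omega) with h | h
    · by_cases hL : chain q U a n ω = L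
      · exact Or.inr (by simp [stoppedChain, stoppedStep, h, hL])
      · exact Or.inl (by simp [stoppedChain, stoppedStep, chain, h, hL, h0 n (by omega)])
    · exact Or.inr (by simp [stoppedChain, stoppedStep, h])

lemma setOf_hitTimeN_lt_subset :
    {ω | hitTimeN (chain q U a) L ω < hitTimeN (chain q U a) 0 ω} ⊆
      ⋃ n, {ω | stoppedChain q U a L n ω = L} := by
  intro ω hω
  obtain ⟨n, hn, hlt⟩ := exists_eq_of_hitTimeN_lt hω
  have h0 : ∀ k ≤ n, chain q U a k ω ≠ 0 := fun k hk hk0 =>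
    (hlt.trans_le (hitTimeN_le hk0)).not_ge (by exact_mod_cast hk)
  exact mem_iUnion.2 ⟨n, (stoppedChain_eq_chain_or_eq h0).elim (·.trans hn) id⟩

end StoppedChain

lemma measurable_stoppedStep (q : ℕ → ℝ) (L : ℕ) :
    Measurable fun p : ℕ × ℝ => stoppedStep q L p.1 p.2 :=
  measurable_from_prod_countable_right fun z => by
    simp only [stoppedStep]
    split_ifs
    exacts [measurable_const, Measurable.ite measurableSet_Iio measurable_const measurable_const]

section PastSigma

variable {Ω : Type*} {q : ℕ → ℝ} {U : ℕ → Ω → ℝ} {a L : ℕ}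

lemma comap_le_pastSigma {n N : ℕ} (h : n < N) :
    MeasurableSpace.comap (U n) inferInstance ≤ pastSigma U N :=
  le_iSup₂ (f := fun i (_ : i ∈ Iio N) => MeasurableSpace.comap (U i) inferInstance) n h

lemma pastSigma_mono : Monotone (pastSigma U) := fun _ _ hmn =>
  iSup₂_le fun _ hi => comap_le_pastSigma (lt_of_lt_of_le hi hmn)

lemma measurable_stoppedChain (n : ℕ) :
    Measurable[pastSigma U n] (stoppedChain q U a L n) := by
  induction n with
  | zero => exact measurable_const
  | succ n ih =>
    exact (measurable_stoppedStep q L).comp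
      ((ih.mono (pastSigma_mono n.le_succ) le_rfl).prodMk
        (measurable_iff_comap_le.2 (comap_le_pastSigma n.lt_succ_self)))

end PastSigma

section Measurability

variable {Ω : Type*} [MeasurableSpace Ω] {U : ℕ → Ω → ℝ}

lemma pastSigma_le (hU : ∀ n, Measurable (U n)) (n : ℕ) : pastSigma U n ≤ ‹_› :=
  iSup₂_le fun i _ => (hU i).comap_le

lemma indep_pastSigma {P : Measure Ω} (hU : ∀ n, Measurable (U n)) (hind : iIndepFun U P)
    (n : ℕ) : Indep (pastSigma U n) (MeasurableSpace.comap (U n) inferInstance) P := by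
  refine indep_of_indep_of_le_right (indep_iSup_of_disjoint (fun i => (hU i).comap_le)
    hind.iIndep (S := Iio n) (T := {n}) (by simp)) ?_
  exact le_iSup₂ (f := fun i (_ : i ∈ ({n} : Set ℕ)) =>
    MeasurableSpace.comap (U i) inferInstance) n rfl

end Measurability

noncomputable def scaleIncr (q : ℕ → ℝ) (j : ℕ) : ℝ :=
  ∏ k ∈ Finset.Ioc 0 j, (1 - q k) / q k

noncomputable def scaleFun (q : ℕ → ℝ) (i : ℕ) : ℝ :=
  ∑ j ∈ Finset.range i, scaleIncr q j

section ScaleFun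

variable {q : ℕ → ℝ} {L : ℕ}

lemma scaleIncr_succ (j : ℕ) :
    scaleIncr q (j + 1) = scaleIncr q j * ((1 - q (j + 1)) / q (j + 1)) :=
  Finset.prod_Ioc_succ_top (Nat.zero_le j) _

lemma scaleFun_succ (i : ℕ) : scaleFun q (i + 1) = scaleFun q i + scaleIncr q i :=
  Finset.sum_range_succ _ _

lemma scaleFun_harmonic {j : ℕ} (hj : j ≠ 0) (hq : q j ≠ 0) :
    q j * scaleFun q (j + 1) + (1 - q j) * scaleFun q (j - 1) = scaleFun q j := by
  obtain ⟨m, rfl⟩ := Nat.exists_eq_succ_of_ne_zero hj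
  rw [Nat.succ_sub_one, scaleFun_succ (m + 1), scaleFun_succ m, scaleIncr_succ]
  field_simp
  ring

lemma scaleIncr_nonneg (hq : ∀ k ∈ Finset.Ioo 0 L, q k ∈ Ioc 0 1) {j : ℕ} (hj : j < L) :
    0 ≤ scaleIncr q j :=
  Finset.prod_nonneg fun k hk => by
    obtain ⟨hk0, hkj⟩ := Finset.mem_Ioc.1 hk
    obtain ⟨h0, h1⟩ := hq k (Finset.mem_Ioo.2 ⟨hk0, by omega⟩)
    exact div_nonneg (sub_nonneg.2 h1) h0.le

lemma scaleIncr_pos (hq : ∀ k ∈ Finset.Ioo 0 L, q k ∈ Ioo 0 1) {j : ℕ} (hj : j < L) :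
    0 < scaleIncr q j :=
  Finset.prod_pos fun k hk => by
    obtain ⟨hk0, hkj⟩ := Finset.mem_Ioc.1 hk
    obtain ⟨h0, h1⟩ := hq k (Finset.mem_Ioo.2 ⟨hk0, by omega⟩)
    exact div_pos (sub_pos.2 h1) h0

lemma scaleFun_nonneg (hq : ∀ k ∈ Finset.Ioo 0 L, q k ∈ Ioc 0 1) {i : ℕ} (hi : i ≤ L) :
    0 ≤ scaleFun q i :=
  Finset.sum_nonneg fun j hj => scaleIncr_nonneg hq (by simp at hj; omega)

lemma scaleFun_pos (hq : ∀ k ∈ Finset.Ioo 0 L, q k ∈ Ioc 0 1) (hL : 0 < L) :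
    0 < scaleFun q L :=
  calc (0 : ℝ) < scaleIncr q 0 := by simp [scaleIncr]
    _ ≤ scaleFun q L := Finset.single_le_sum (fun j hj => scaleIncr_nonneg hq (by simpa using hj))
        (Finset.mem_range.2 hL)

end ScaleFun

section OneStep

variable {Ω : Type*} [MeasurableSpace Ω] {P : Measure Ω} {q : ℕ → ℝ} {V : Ω → ℝ} {L : ℕ}

lemma measure_preimage_eq_volume_inter (hV : Measurable V)
    (hunif : P.map V = volume.restrict (Icc 0 1)) {s : Set ℝ} (hs : MeasurableSet s) :
    P (V ⁻¹' s) = volume (s ∩ Icc 0 1) := by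
  rw [← Measure.map_apply hV hs, hunif, Measure.restrict_apply hs]

lemma measure_stoppedStep_eq_toReal (hV : Measurable V)
    (hunif : P.map V = volume.restrict (Icc 0 1)) {j : ℕ} (hj0 : j ≠ 0) (hjL : j ≠ L)
    (hq : q j ∈ Icc 0 1) (i : ℕ) :
    (P (V ⁻¹' {u | stoppedStep q L j u = i})).toReal =
      (if i = j + 1 then q j else 0) + (if i = j - 1 then 1 - q j else 0) := by
  obtain ⟨hq0, hq1⟩ := hq
  have hstep : ∀ u, stoppedStep q L j u = if u < q j then j + 1 else j - 1 := by
    simp [stoppedStep, hj0, hjL]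
  by_cases hup : i = j + 1
  · have hset : {u | stoppedStep q L j u = i} = Iio (q j) := by
      ext u; by_cases hu : u < q j <;> simp [hstep, hu, hup]
    have hinter : Iio (q j) ∩ Icc 0 1 = Ico 0 (q j) := by
      ext x; simp only [mem_inter_iff, mem_Iio, mem_Icc, mem_Ico]; grind
    rw [hset, measure_preimage_eq_volume_inter hV hunif measurableSet_Iio, hinter,
      Real.volume_Ico, ENNReal.toReal_ofReal (by linarith), if_pos hup, if_neg (by omega)]
    ring
  by_cases hdown : i = j - 1
  · have hset : {u | stoppedStep q L j u = i} = Ici (q j) := by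
      ext u
      simp only [mem_ofPred_eq, mem_Ici, hstep, hdown]
      split_ifs with hu <;> constructor <;> intro h <;> first | omega | linarith
    have hinter : Ici (q j) ∩ Icc 0 1 = Icc (q j) 1 := by
      ext x; simp only [mem_inter_iff, mem_Ici, mem_Icc]; grind
    rw [hset, measure_preimage_eq_volume_inter hV hunif measurableSet_Ici, hinter,
      Real.volume_Icc, ENNReal.toReal_ofReal (by linarith), if_neg hup, if_pos hdown]
    ring
  · have hset : {u | stoppedStep q L j u = i} = ∅ := by
      ext u; by_cases hu : u < q j <;> simp [hstep, hu] <;> omega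
    simp [hset, hup, hdown]

lemma sum_scaleFun_mul_measure_stoppedStep [IsProbabilityMeasure P] (hV : Measurable V)
    (hunif : P.map V = volume.restrict (Icc 0 1)) (hq : ∀ k ∈ Finset.Ioo 0 L, q k ∈ Ioc 0 1)
    {j : ℕ} (hj : j ≤ L) :
    ∑ i ∈ Finset.range (L + 1),
        scaleFun q i * (P (V ⁻¹' {u | stoppedStep q L j u = i})).toReal = scaleFun q j := by
  by_cases habs : j = 0 ∨ j = L
  · have hset : ∀ i, (P (V ⁻¹' {u | stoppedStep q L j u = i})).toReal =
        if j = i then 1 else 0 := by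
      intro i
      have hstep : ∀ u, stoppedStep q L j u = j := fun u => if_pos habs
      simp only [hstep]
      by_cases hij : j = i <;> simp [hij]
    simp only [hset]
    simp [Nat.lt_succ_of_le hj]
  · push Not at habs
    obtain ⟨hq0, hq1⟩ := hq j (Finset.mem_Ioo.2 ⟨by omega, by omega⟩)
    simp only [measure_stoppedStep_eq_toReal hV hunif habs.1 habs.2 ⟨hq0.le, hq1⟩, mul_add,
      mul_ite, mul_zero, Finset.sum_add_distrib, Finset.sum_ite_eq', Finset.mem_range]
    rw [if_pos (by omega), if_pos (by omega)]
    linear_combination scaleFun_harmonic habs.1 hq0.ne'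

end OneStep

section OptionalStopping

variable {Ω : Type*} [MeasurableSpace Ω] {P : Measure Ω} {q : ℕ → ℝ} {U : ℕ → Ω → ℝ}
  {a L : ℕ}

lemma measure_stoppedChain_succ (hU : ∀ n, Measurable (U n)) (hind : iIndepFun U P)
    (haL : a ≤ L) (n i : ℕ) :
    P {ω | stoppedChain q U a L (n + 1) ω = i} =
      ∑ j ∈ Finset.range (L + 1), P {ω | stoppedChain q U a L n ω = j} *
        P (U n ⁻¹' {u | stoppedStep q L j u = i}) := by
  have hW : ∀ j, MeasurableSet[pastSigma U n] {ω | stoppedChain q U a L n ω = j} :=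
    fun j => measurable_stoppedChain n (measurableSet_singleton j)
  have hS : ∀ j, MeasurableSet {u | stoppedStep q L j u = i} :=
    fun j => (measurable_stoppedStep q L).comp measurable_prodMk_left (measurableSet_singleton i)
  have hsplit : {ω | stoppedChain q U a L (n + 1) ω = i} = ⋃ j ∈ Finset.range (L + 1),
      {ω | stoppedChain q U a L n ω = j} ∩ U n ⁻¹' {u | stoppedStep q L j u = i} := by
    ext ω
    simp only [mem_ofPred_eq, mem_iUnion, mem_inter_iff, mem_preimage, Finset.mem_range,
      exists_prop]
    exact ⟨fun h => ⟨_, Nat.lt_succ_of_le (stoppedChain_le haL n ω), rfl, h⟩,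
      fun ⟨_, _, hj, h⟩ => by simpa only [stoppedChain, hj] using h⟩
  rw [hsplit, measure_biUnion_finset]
  · exact Finset.sum_congr rfl fun j _ =>
      (Indep_iff _ _ _).1 (indep_pastSigma hU hind n) _ _ (hW j) ⟨_, hS j, rfl⟩
  · exact fun j _ k _ hjk => Disjoint.mono inter_subset_left inter_subset_left
      (disjoint_left.2 fun ω h1 h2 => hjk (h1.symm.trans h2))
  · exact fun j _ => (pastSigma_le hU n _ (hW j)).inter (hU n (hS j))

variable [IsProbabilityMeasure P]

/-- `𝔼[scaleFun q (stoppedChain q U a L n)] = scaleFun q a`: the stopped chain makes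
`scaleFun q` a martingale. -/
lemma sum_scaleFun_mul_measure_stoppedChain (hU : ∀ n, Measurable (U n))
    (hind : iIndepFun U P) (hunif : ∀ n, P.map (U n) = volume.restrict (Icc 0 1))
    (hq : ∀ k ∈ Finset.Ioo 0 L, q k ∈ Ioc 0 1) (haL : a ≤ L) (n : ℕ) :
    ∑ i ∈ Finset.range (L + 1),
      scaleFun q i * (P {ω | stoppedChain q U a L n ω = i}).toReal = scaleFun q a := by
  induction n with
  | zero =>
    have hset : ∀ i, (P {ω | stoppedChain q U a L 0 ω = i}).toReal = if a = i then 1 else 0 := by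
      intro i; by_cases h : a = i <;> simp [stoppedChain, h]
    simp only [hset]
    simp [Nat.lt_succ_of_le haL]
  | succ n ih =>
    have hstep : ∀ i, (P {ω | stoppedChain q U a L (n + 1) ω = i}).toReal =
        ∑ j ∈ Finset.range (L + 1), (P {ω | stoppedChain q U a L n ω = j}).toReal *
          (P (U n ⁻¹' {u | stoppedStep q L j u = i})).toReal := by
      intro i
      rw [measure_stoppedChain_succ hU hind haL, ENNReal.toReal_sum fun j _ =>
        ENNReal.mul_ne_top (measure_ne_top _ _) (measure_ne_top _ _)]
      simp only [ENNReal.toReal_mul]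
    simp only [hstep, Finset.mul_sum]
    rw [Finset.sum_comm, ← ih]
    refine Finset.sum_congr rfl fun j hj => ?_
    rw [← sum_scaleFun_mul_measure_stoppedStep (hU n) (hunif n) hq
      (Nat.lt_succ_iff.1 (Finset.mem_range.1 hj)), Finset.sum_mul]
    exact Finset.sum_congr rfl fun i _ => by ring

theorem measure_hitTimeN_lt_le (hU : ∀ n, Measurable (U n)) (hind : iIndepFun U P)
    (hunif : ∀ n, P.map (U n) = volume.restrict (Icc 0 1))
    (hq : ∀ k ∈ Finset.Ioo 0 L, q k ∈ Ioc 0 1) (haL : a ≤ L) (hL : 0 < L) :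
    (P {ω | hitTimeN (chain q U a) L ω < hitTimeN (chain q U a) 0 ω}).toReal ≤
      scaleFun q a / scaleFun q L := by
  have hpos := scaleFun_pos hq hL
  have hn : ∀ n, P {ω | stoppedChain q U a L n ω = L} ≤
      ENNReal.ofReal (scaleFun q a / scaleFun q L) := fun n => by
    rw [← ENNReal.ofReal_toReal (measure_ne_top P _)]
    refine ENNReal.ofReal_le_ofReal ((le_div_iff₀ hpos).2 ?_)
    rw [mul_comm, ← sum_scaleFun_mul_measure_stoppedChain hU hind hunif hq haL n]
    exact Finset.single_le_sum
      (f := fun i => scaleFun q i * (P {ω | stoppedChain q U a L n ω = i}).toReal)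
      (fun i hi => mul_nonneg (scaleFun_nonneg hq (by simpa [Nat.lt_succ_iff] using hi))
        ENNReal.toReal_nonneg) (Finset.mem_range.2 L.lt_succ_self)
  refine ENNReal.toReal_le_of_le_ofReal (div_nonneg (scaleFun_nonneg hq haL) hpos.le) ?_
  calc P {ω | hitTimeN (chain q U a) L ω < hitTimeN (chain q U a) 0 ω}
      ≤ P (⋃ n, {ω | stoppedChain q U a L n ω = L}) := measure_mono setOf_hitTimeN_lt_subset
    _ = ⨆ n, P {ω | stoppedChain q U a L n ω = L} :=
      monotone_setOf_stoppedChain_eq.measure_iUnion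
    _ ≤ _ := iSup_le hn

end OptionalStopping

lemma exp_le_odds_ratio {x δ : ℝ} (hδ : 0 ≤ δ) (hxδ : -δ ≤ x) (hx : |x| ≤ 1 / 6) :
    Real.exp (3 * x - 3 * δ) ≤ (1 / 2 + x) / (1 / 2 - x) := by
  obtain ⟨hx₁, hx₂⟩ := abs_le.1 hx
  calc Real.exp (3 * x - 3 * δ) = (Real.exp (-(3 * x - 3 * δ)))⁻¹ := by rw [Real.exp_neg, inv_inv]
    _ ≤ (1 - (3 * x - 3 * δ))⁻¹ :=
      inv_anti₀ (by linarith) (Real.one_sub_le_exp_neg _)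
    _ ≤ (1 / 2 + x) / (1 / 2 - x) := by
      rw [inv_eq_one_div, div_le_div_iff₀ (by linarith) (by linarith)]
      rcases le_total 0 x with h | h <;> nlinarith

lemma sum_Ioc_natCast_mul_two {j n : ℕ} (h : j ≤ n) :
    (∑ k ∈ Finset.Ioc j n, (k : ℝ)) * 2 = n * (n + 1) - j * (j + 1) := by
  induction n, h using Nat.le_induction with
  | base => simp
  | succ n hjn ih =>
    rw [Finset.sum_Ioc_succ_top hjn, add_mul, ih]
    push_cast
    ring

lemma le_sum_Ioc_natCast {m : ℝ} {j L : ℕ} (hmL : m ≤ L) (hj : (j : ℝ) + 1 ≤ m / 3) :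
    4 * m ^ 2 / 9 - m / 2 ≤ ∑ k ∈ Finset.Ioc j (L - 1), (k : ℝ) := by
  have hjL : j + 1 ≤ L := by
    have : (j : ℝ) + 1 ≤ L := by linarith [(Nat.cast_nonneg j : (0 : ℝ) ≤ j)]
    exact_mod_cast this
  have hsum := sum_Ioc_natCast_mul_two (Nat.le_sub_one_of_lt hjL)
  rw [Nat.cast_sub (by omega), Nat.cast_one] at hsum
  have hj0 : (0 : ℝ) ≤ j := Nat.cast_nonneg j
  nlinarith [mul_le_mul hj (by linarith : (j : ℝ) ≤ m / 3) hj0 (by linarith)]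

lemma scaleFun_div_le {q : ℕ → ℝ} {a L : ℕ} (hq : ∀ k ∈ Finset.Ioo 0 L, q k ∈ Ioo 0 1)
    (haL : a ≤ L) {B : ℝ}
    (hB : ∀ j < a, Real.exp B ≤ ∏ k ∈ Finset.Ioc j (L - 1), (1 - q k) / q k) :
    scaleFun q a / scaleFun q L ≤ a * Real.exp (-B) := by
  rcases Nat.eq_zero_or_pos a with rfl | ha
  · simp [scaleFun]
  have hpos : ∀ j < L, 0 < scaleIncr q j := fun j hj => scaleIncr_pos hq hj
  have hlast := hpos (L - 1) (by omega)
  have hincr : ∀ j < a, scaleIncr q j ≤ scaleIncr q (L - 1) * Real.exp (-B) := by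
    intro j hj
    have hsplit : scaleIncr q j * ∏ k ∈ Finset.Ioc j (L - 1), (1 - q k) / q k =
        scaleIncr q (L - 1) := Finset.prod_Ioc_consecutive _ (Nat.zero_le j) (by omega)
    rw [Real.exp_neg, ← div_eq_mul_inv, le_div_iff₀ (Real.exp_pos B), ← hsplit]
    exact mul_le_mul_of_nonneg_left (hB j hj) (hpos j (by omega)).le
  have hnum : scaleFun q a ≤ a * (scaleIncr q (L - 1) * Real.exp (-B)) := by
    simpa [scaleFun] using
      Finset.sum_le_card_nsmul _ _ _ fun j hj => hincr j (Finset.mem_range.1 hj)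
  have hden : scaleIncr q (L - 1) ≤ scaleFun q L :=
    Finset.single_le_sum (fun j hj => (hpos j (Finset.mem_range.1 hj)).le)
      (Finset.mem_range.2 (by omega))
  calc scaleFun q a / scaleFun q L ≤ scaleFun q a / scaleIncr q (L - 1) :=
        div_le_div_of_nonneg_left
          (Finset.sum_nonneg fun j hj => (hpos j (by simp at hj; omega)).le) hlast hden
    _ ≤ a * (scaleIncr q (L - 1) * Real.exp (-B)) / scaleIncr q (L - 1) := by gcongr
    _ = a * Real.exp (-B) := by field_simp

section LinearDrift

variable {C₁ C₂ M s K : ℝ}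

lemma abs_drift_le (hC₁ : 0 ≤ C₁) (hC₂ : 0 ≤ C₂) (hM : 0 ≤ M) (hs : 0 ≤ s) (hK : 0 < K)
    (hsmall : C₁ * M * s + C₁ / K + C₂ * s ≤ 1 / 6) {i : ℕ} (hi : (i : ℝ) ≤ M * s * K + 1) :
    |C₁ * i / K - C₂ * s| ≤ 1 / 6 := by
  have hi' : C₁ * i / K ≤ C₁ * M * s + C₁ / K := by
    rw [div_le_iff₀ hK]
    calc C₁ * i ≤ C₁ * (M * s * K + 1) := by gcongr
      _ = (C₁ * M * s + C₁ / K) * K := by field_simp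
  have : 0 ≤ C₁ * i / K := by positivity
  have : 0 ≤ C₁ * M * s := by positivity
  have : 0 ≤ C₂ * s := by positivity
  exact abs_le.2 ⟨by linarith, by linarith⟩

lemma le_sum_linear_drift (hC₁ : 0 < C₁) (hC₂ : 0 ≤ C₂) (hC₂M : 8 * C₂ ≤ C₁ * M) (hs : 0 ≤ s)
    (hK : 0 < K) (hsmall : C₁ * M * s + C₁ / K + C₂ * s ≤ 1 / 6) {j L : ℕ}
    (hmL : M * s * K ≤ L) (hLm : (L : ℝ) ≤ M * s * K + 1) (hj : (j : ℝ) + 1 ≤ M * s * K / 3) :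
    C₁ * M ^ 2 * s ^ 2 * K / 2 - 1 ≤
      ∑ k ∈ Finset.Ioc j (L - 1), (3 * (C₁ * k / K - C₂ * s) - 3 * (C₂ * s)) := by
  have hM : 0 ≤ M := by nlinarith
  have hsum := le_sum_Ioc_natCast hmL hj
  have hcard : ((Finset.Ioc j (L - 1)).card : ℝ) ≤ M * s * K + 1 :=
    le_trans (by exact_mod_cast (Nat.card_Ioc j (L - 1)).le.trans (by omega)) hLm
  have hterm : ∀ k : ℕ, 3 * (C₁ * k / K - C₂ * s) - 3 * (C₂ * s) =
      3 * C₁ / K * k - 6 * C₂ * s := fun k => by field_simp; ring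
  simp only [hterm, Finset.sum_sub_distrib, ← Finset.mul_sum, Finset.sum_const, nsmul_eq_mul]
  have hquad : 3 * C₁ / K * (4 * (M * s * K) ^ 2 / 9 - M * s * K / 2) =
      4 / 3 * (C₁ * M ^ 2 * s ^ 2 * K) - 3 / 2 * (C₁ * M * s) := by field_simp; ring
  have hlin : 6 * C₂ * s * (M * s * K + 1) ≤ 3 / 4 * (C₁ * M ^ 2 * s ^ 2 * K) + 6 * (C₂ * s) := by
    nlinarith [mul_le_mul_of_nonneg_right hC₂M (by positivity : 0 ≤ M * s ^ 2 * K)]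
  have h1 := mul_le_mul_of_nonneg_left hsum (by positivity : 0 ≤ 3 * C₁ / K)
  have h2 := mul_le_mul_of_nonneg_left hcard (by positivity : 0 ≤ 6 * C₂ * s)
  have : 0 ≤ C₁ * M ^ 2 * s ^ 2 * K := by positivity
  have : 0 ≤ C₁ / K := by positivity
  have : 0 ≤ C₁ * M * s := by positivity
  -- `4/3 - 3/4 ≥ 1/2`, and `hsmall` gives `3/2 C₁ M s + 6 C₂ s ≤ 1`
  linarith

lemma scaleFun_div_le_of_linear_drift {q : ℕ → ℝ} {a L : ℕ} (hC₁ : 0 < C₁) (hC₂ : 0 ≤ C₂)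
    (hC₂M : 8 * C₂ ≤ C₁ * M) (hs : 0 ≤ s) (hK : 0 < K)
    (hsmall : C₁ * M * s + C₁ / K + C₂ * s ≤ 1 / 6)
    (hmL : M * s * K ≤ L) (hLm : (L : ℝ) ≤ M * s * K + 1) (ha : (a : ℝ) ≤ M * s * K / 3)
    (hq : ∀ i ≤ L, q i = 1 / 2 - C₁ * i / K + C₂ * s) :
    scaleFun q a / scaleFun q L ≤ a * Real.exp (1 - C₁ * M ^ 2 * s ^ 2 * K / 2) := by
  have hM : 0 ≤ M := by nlinarith
  have hx : ∀ i ≤ L, |C₁ * i / K - C₂ * s| ≤ 1 / 6 := fun i hi =>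
    abs_drift_le hC₁.le hC₂ hM hs hK hsmall ((Nat.cast_le.2 hi).trans hLm)
  have hq' : ∀ i ≤ L, q i = 1 / 2 - (C₁ * i / K - C₂ * s) := fun i hi => by rw [hq i hi]; ring
  have haL : a ≤ L := by
    have : (a : ℝ) ≤ L := by nlinarith [mul_nonneg (mul_nonneg hM hs) hK.le]
    exact_mod_cast this
  rw [show 1 - C₁ * M ^ 2 * s ^ 2 * K / 2 = -(C₁ * M ^ 2 * s ^ 2 * K / 2 - 1) by ring]
  refine scaleFun_div_le (fun k hk => ?_) haL fun j hj => ?_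
  · obtain ⟨hk0, hkL⟩ := Finset.mem_Ioo.1 hk
    obtain ⟨h₁, h₂⟩ := abs_le.1 (hx k hkL.le)
    rw [hq' k hkL.le]
    constructor <;> linarith
  · calc Real.exp (C₁ * M ^ 2 * s ^ 2 * K / 2 - 1)
        ≤ Real.exp (∑ k ∈ Finset.Ioc j (L - 1), (3 * (C₁ * k / K - C₂ * s) - 3 * (C₂ * s))) :=
          Real.exp_le_exp.2 (le_sum_linear_drift hC₁ hC₂ hC₂M hs hK hsmall hmL hLm
            (by have : (j : ℝ) + 1 ≤ a := by exact_mod_cast hj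
                linarith))
      _ ≤ ∏ k ∈ Finset.Ioc j (L - 1), (1 - q k) / q k := by
          rw [Real.exp_sum]
          refine Finset.prod_le_prod (fun _ _ => (Real.exp_pos _).le) fun k hk => ?_
          have hkL : k ≤ L := by simp at hk; omega
          rw [hq' k hkL, show ∀ x : ℝ, 1 - (1 / 2 - x) = 1 / 2 + x from fun x => by ring]
          exact exp_le_odds_ratio (by positivity)
            (by linarith [show 0 ≤ C₁ * (k : ℝ) / K by positivity]) (hx k hkL)

theorem measure_hitTimeN_lt_le_of_linear_drift {Ω : Type*} [MeasurableSpace Ω] {P : Measure Ω}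
    [IsProbabilityMeasure P] {U : ℕ → Ω → ℝ} (hU : ∀ n, Measurable (U n))
    (hind : iIndepFun U P) (hunif : ∀ n, P.map (U n) = volume.restrict (Icc 0 1))
    {a : ℕ} (hC₁ : 0 < C₁) (hC₂ : 0 ≤ C₂) (hC₂M : 8 * C₂ ≤ C₁ * M)
    (hM : 0 < M) (hs : 0 < s) (hK : 0 < K) (hsmall : C₁ * M * s + C₁ / K + C₂ * s ≤ 1 / 6)
    (ha : (a : ℝ) ≤ M * s * K / 3) :
    (P {ω | hitTimeN (chain (fun i : ℕ => min 1 (max 0 (1 / 2 - C₁ * i / K + C₂ * s))) U a)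
          ⌈M * s * K⌉₊ ω <
        hitTimeN (chain (fun i : ℕ => min 1 (max 0 (1 / 2 - C₁ * i / K + C₂ * s))) U a)
          0 ω}).toReal ≤
      a * Real.exp (1 - C₁ * M ^ 2 * s ^ 2 * K / 2) := by
  set L := ⌈M * s * K⌉₊
  have hmL : M * s * K ≤ L := Nat.le_ceil _
  have hLm : (L : ℝ) ≤ M * s * K + 1 := (Nat.ceil_lt_add_one (by positivity)).le
  have hq : ∀ i ≤ L, min 1 (max 0 (1 / 2 - C₁ * i / K + C₂ * s)) = 1 / 2 - C₁ * i / K + C₂ * s :=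
    fun i hi => by
      obtain ⟨h₁, h₂⟩ := abs_le.1 (abs_drift_le hC₁.le hC₂ hM.le hs.le hK hsmall
        ((Nat.cast_le.2 hi).trans hLm))
      rw [max_eq_right (by linarith), min_eq_right (by linarith)]
  have haL : a ≤ L := by
    have : (a : ℝ) ≤ L := by nlinarith [mul_pos (mul_pos hM hs) hK]
    exact_mod_cast this
  refine (measure_hitTimeN_lt_le hU hind hunif (fun k hk => ?_) haL
    (Nat.ceil_pos.2 (by positivity))).trans
    (scaleFun_div_le_of_linear_drift hC₁ hC₂ hC₂M hs.le hK hsmall hmL hLm ha hq)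
  obtain ⟨h₁, h₂⟩ := abs_le.1 (abs_drift_le hC₁.le hC₂ hM.le hs.le hK hsmall
    ((Nat.cast_le.2 (Finset.mem_Ioo.1 hk).2.le).trans hLm))
  rw [Set.mem_Ioc, hq k (Finset.mem_Ioo.1 hk).2.le]
  constructor <;> linarith

end LinearDrift

lemma tendsto_mul_exp_neg_rpow {r : ℝ} (hr : 0 < r) :
    Tendsto (fun K : ℕ => (K : ℝ) * Real.exp (-(K : ℝ) ^ r)) atTop (nhds 0) := by
  have h := (tendsto_rpow_mul_exp_neg_mul_atTop_nhds_zero r⁻¹ 1 one_pos).comp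
    ((tendsto_rpow_atTop hr).comp tendsto_natCast_atTop_atTop)
  refine h.congr fun K => ?_
  simp only [Function.comp, neg_one_mul, ← Real.rpow_mul (Nat.cast_nonneg K),
    mul_inv_cancel₀ hr.ne', Real.rpow_one]

lemma eventually_two_mul_rpow_le {α c : ℝ} (hc : 0 < c) {σ : ℕ → ℝ}
    (hσK : Tendsto (fun K : ℕ => (K : ℝ) ^ ((1 : ℝ) / 2 - α) * σ K) atTop atTop) :
    ∀ᶠ K : ℕ in atTop, 2 * (K : ℝ) ^ (2 * α) ≤ c * σ K ^ 2 * K := by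
  have h := ((tendsto_pow_atTop two_ne_zero).comp hσK).const_mul_atTop hc
  filter_upwards [h.eventually_ge_atTop 2, eventually_gt_atTop 0] with K hK2 hK
  have hK' : (0 : ℝ) < K := by exact_mod_cast hK
  have hsplit : (K : ℝ) = ((K : ℝ) ^ ((1 : ℝ) / 2 - α)) ^ 2 * (K : ℝ) ^ (2 * α) := by
    rw [← Real.rpow_natCast, ← Real.rpow_mul hK'.le, ← Real.rpow_add hK',
      show (1 / 2 - α) * ((2 : ℕ) : ℝ) + 2 * α = 1 by push_cast; ring, Real.rpow_one]
  calc 2 * (K : ℝ) ^ (2 * α)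
      ≤ c * ((K : ℝ) ^ ((1 : ℝ) / 2 - α) * σ K) ^ 2 * (K : ℝ) ^ (2 * α) := by
        gcongr
        exact hK2
    _ = c * σ K ^ 2 * K := by
        nth_rewrite 3 [hsplit]
        ring

lemma eventually_linear_drift_le {s : ℕ → ℝ} (hs : Tendsto s atTop (nhds 0)) (C₁ C₂ M : ℝ) :
    ∀ᶠ K : ℕ in atTop, C₁ * M * s K + C₁ / K + C₂ * s K ≤ 1 / 6 := by
  have h : Tendsto (fun K : ℕ => C₁ * M * s K + C₁ / K + C₂ * s K) atTop (nhds 0) := by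
    simpa using ((hs.const_mul (C₁ * M)).add
      (tendsto_const_nhds.div_atTop tendsto_natCast_atTop_atTop)).add (hs.const_mul C₂)
  exact (h.eventually_lt_const (by norm_num)).mono fun _ => le_of_lt

lemma exp_mul_le_of_le_mul_exp {A G K a p : ℝ} (ha : 0 ≤ a) (haK : a ≤ K) (hG : 2 * A ≤ G)
    (hp : p ≤ a * Real.exp (1 - G)) :
    Real.exp A * p ≤ Real.exp 1 * (K * Real.exp (-A)) :=
  calc Real.exp A * p ≤ Real.exp A * (K * Real.exp (1 - 2 * A)) := by
        gcongr
        exact hp.trans (mul_le_mul haK (Real.exp_le_exp.2 (by linarith)) (Real.exp_pos _).le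
          (ha.trans haK))
    _ = Real.exp 1 * (K * Real.exp (-A)) := by
        rw [show 1 - 2 * A = 1 + -A + -A by ring, Real.exp_add, Real.exp_add, Real.exp_neg]
        field_simp

end BirthDeathChain

open BirthDeathChain in
/-- Fix `α ∈ (0,1/2)`, a sequence `σ_K > 0` with `σ_K → 0` and `K^{1/2−α}·σ_K → ∞`, and
constants `C₁ > 0`, `C₂ ≥ 0`, `ε > 0`, `M ≥ 8·C₂/C₁`.  For each `K ≥ 1` let `(Z_n)` be
the discrete-time Markov chain on `ℕ` with `p(0,1) = 1` and, for `i ≥ 1`,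
`p(i,i+1) = q_K(i) = min(1, max(0, 1/2 − C₁·i/K + C₂·ε·σ_K))`, `p(i,i−1) = 1 − q_K(i)`,
started at `a_K`.  Then for every choice of naturals `a_K ≤ (1/3)·M·ε·σ_K·K`,
`lim_{K→∞} e^{K^{2α}} · P_{a_K}[ τ_{⌈M·ε·σ_K·K⌉} < τ_0 ] = 0`. -/
theorem stmt9 (α : ℝ) (hα : α ∈ Set.Ioo (0 : ℝ) (1 / 2))
    (σ : ℕ → ℝ) (hσpos : ∀ K, 0 < σ K)
    (hσ0 : Tendsto σ atTop (nhds 0))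
    (hσK : Tendsto (fun K : ℕ => (K : ℝ) ^ ((1 : ℝ) / 2 - α) * σ K) atTop atTop)
    (C₁ C₂ ε M : ℝ) (hC₁ : 0 < C₁) (hC₂ : 0 ≤ C₂) (hε : 0 < ε)
    (hM : 8 * C₂ / C₁ ≤ M)
    (Ω : ℕ → Type*) (mΩ : ∀ K, MeasurableSpace (Ω K))
    (P : ∀ K, Measure (Ω K)) (hP : ∀ K, IsProbabilityMeasure (P K))
    (U : ∀ K, ℕ → Ω K → ℝ) (hmeas : ∀ K n, Measurable (U K n))
    (hindep : ∀ K, iIndepFun (U K) (P K))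
    (hunif : ∀ K n, Measure.map (U K n) (P K) = volume.restrict (Set.Icc (0 : ℝ) 1))
    (a : ℕ → ℕ) (ha : ∀ K, (a K : ℝ) ≤ (1 / 3) * M * ε * σ K * K) :
    Tendsto (fun K : ℕ =>
      Real.exp ((K : ℝ) ^ (2 * α)) *
        (P K {ω | hitTimeN
              (chain (fun i : ℕ => min 1 (max 0 (1 / 2 - C₁ * i / K + C₂ * ε * σ K)))
                (U K) (a K))
              ⌈M * ε * σ K * (K : ℝ)⌉₊ ω
            < hitTimeN
              (chain (fun i : ℕ => min 1 (max 0 (1 / 2 - C₁ * i / K + C₂ * ε * σ K)))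
                (U K) (a K))
              0 ω}).toReal) atTop (nhds 0) := by
  obtain rfl | hM₀ := (show 0 ≤ M from (div_nonneg (by positivity) hC₁.le).trans hM).eq_or_lt
  · -- for `M = 0` the target state is `0` itself, and `τ_0 < τ_0` never happens
    simp
  have hC₂M : 8 * C₂ ≤ C₁ * M := by rw [div_le_iff₀ hC₁] at hM; linarith
  have hs : Tendsto (fun K : ℕ => ε * σ K) atTop (nhds 0) := by simpa using hσ0.const_mul ε
  refine squeeze_zero' (.of_forall fun K => by positivity) ?_ (by
    simpa using (tendsto_mul_exp_neg_rpow (by linarith [hα.1] : 0 < 2 * α)).const_mul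
      (Real.exp 1))
  filter_upwards [eventually_linear_drift_le hs C₁ C₂ M,
    (hs.const_mul (M / 3)).eventually_lt_const (by simp : M / 3 * 0 < 1),
    eventually_two_mul_rpow_le (c := C₁ * M ^ 2 * ε ^ 2 / 2) (by positivity) hσK,
    eventually_gt_atTop 0] with K hsmall haK hrate hK
  have hK' : (0 : ℝ) < K := by exact_mod_cast hK
  have := hP K
  simp only [mul_assoc C₂ ε, mul_assoc M ε]
  refine exp_mul_le_of_le_mul_exp (Nat.cast_nonneg _) (by nlinarith [ha K])
    (by linarith [show C₁ * M ^ 2 * (ε * σ K) ^ 2 * K / 2 = C₁ * M ^ 2 * ε ^ 2 / 2 * σ K ^ 2 * K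
      by ring])
    (measure_hitTimeN_lt_le_of_linear_drift (hmeas K) (hindep K) (hunif K) hC₁ hC₂ hC₂M hM₀
      (mul_pos hε (hσpos K)) hK' hsmall (by linarith [ha K]))
end

section
/- Fix x₀ ∈ X and T > 0. Let x : [0,T] → X solve the canonical equation of adaptive dynamics dx(t)/dt = Σ_{h=1}^{A} h²·m(x(t))·z̄(x(t))·g(x(t))·M(x(t),h) with x(0) = x₀, and let x₁, x₂ : [0,T] → X solve, with x₁(0) = x₂(0) = x₀, the ODEs dx₁(t)/dt = [ z̄(x₁(t))·b(x₁(t))·m(x₁(t))·p₁^ε(x₁(t)) − C^a_Lip·η ] · Σ_{h=1}^{A} h·r̄₁^{ε,η}(x₁(t),h) and dx₂(t)/dt = [ z̄(x₂(t))·b(x₂(t))·m(x₂(t))·p₂^ε(x₂(t)) + C^a_Lip·η ] · Σ_{h=1}^{A} h·r̄₂^{ε,η}(x₂(t),h). Then there exists a constant C, depending only on A, θ, m₀, the Lipschitz constants and the upper and positive lower bounds of b, d, c, m, M, g, and on C¹_B, C²_B, C^r_Lip, C^a_Lip — but not on x₀, T, ε, η — such that sup_{t∈[0,T]} |x_j(t)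 − x(t)| ≤ C·T·e^{C·T}·(η + ε) for j = 1, 2. -/
/-!
Both approximating drifts are `O(η + ε)`-close to the CEAD drift, uniformly on `X`: writing the
CEAD drift as `a₀(x) · Σ_h h r₀(x,h)` with the `ε = 0` limits `a₀ = z̄ b m p₀` and `r₀ = M q₀/p₀`,
one has `a_j^ε − a₀ = O(ε)` and `r_j^ε − r₀ = O(ε)` because `q_j^ε − q₀ = O(ε)` and `p_j^ε` stays
bounded below; the cumulative-sum correction moves each weight by at most `A·C^r_Lip·η`, since the
partial sums of the probability vector `r_j^ε` already lie in `[0,1]`. The CEAD drift is Lipschitz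
on the compact `X`, so Gronwall's inequality turns the drift error `C(η + ε)` into the bound
`C(η + ε)·T·e^{KT}` on the trajectories.
-/

open Set

/-- The data and standing assumptions of Lemma 8.2 of the paper (comparison of the
approximating trait-substitution dynamics with the canonical equation of adaptive
dynamics).  The trait space is the compact interval `X = [xl, xu]`;  `b, d` are the
birth and death rates, `m` the mutation probability, `c` the competition kernel,
`g x = ∂₁f(x,x)` the fitness gradient (where `f(y,x) = b y − d y − c y x·z̄ x` is the
invasion fitness and `z̄ x = (b x − d x)/c x x` the equilibrium density), `M x h` the
mutation law on `{1,…,A}`, and `C1B, C2B, ε0, CrLip, CaLip` the constants from the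
construction of the approximating Markov jump processes. -/
structure CEADSetup where
  xl : ℝ
  xu : ℝ
  hX : xl ≤ xu
  A : ℕ
  hA : 1 ≤ A
  b : ℝ → ℝ
  d : ℝ → ℝ
  m : ℝ → ℝ
  c : ℝ → ℝ → ℝ
  g : ℝ → ℝ
  M : ℝ → ℕ → ℝ
  θ : ℝ
  m0 : ℝ
  C1B : ℝ
  C2B : ℝ
  ε0 : ℝ
  CrLip : NNReal
  CaLip : NNReal
  Lb : NNReal
  Ld : NNReal
  Lm : NNReal
  Lc : NNReal
  Lg : NNReal
  LM : NNReal
  hθ : 0 < θ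
  hm0 : 0 < m0
  hC1B : 0 < C1B
  hC2B : 0 < C2B
  hε0 : 0 < ε0
  hbpos : ∀ x ∈ Set.Icc xl xu, 0 < b x
  hdpos : ∀ x ∈ Set.Icc xl xu, 0 < d x
  hbd : ∀ x ∈ Set.Icc xl xu, 0 < b x - d x
  hm : ∀ x ∈ Set.Icc xl xu, m x ∈ Set.Ioc (0 : ℝ) 1
  hcpos : ∀ x ∈ Set.Icc xl xu, ∀ y ∈ Set.Icc xl xu, 0 < c x y
  hLb : LipschitzOnWith Lb b (Set.Icc xl xu)
  hLd : LipschitzOnWith Ld d (Set.Icc xl xu)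
  hLm : LipschitzOnWith Lm m (Set.Icc xl xu)
  hLc : LipschitzOnWith Lc (fun p : ℝ × ℝ => c p.1 p.2)
    (Set.Icc xl xu ×ˢ Set.Icc xl xu)
  hLg : LipschitzOnWith Lg g (Set.Icc xl xu)
  /-- `g` is the fitness gradient `x ↦ ∂₁ f (x,x)` of the invasion fitness
  `f(y,x) = b y − d y − c y x · z̄ x`. -/
  hgdef : ∀ x ∈ Set.Icc xl xu,
    g x = deriv (fun y => b y - d y - c y x * ((b x - d x) / c x x)) x
  hgθ : ∀ x ∈ Set.Icc xl xu, θ ≤ g x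
  hMnn : ∀ x ∈ Set.Icc xl xu, ∀ h : ℕ, 0 ≤ M x h
  hLM : ∀ h : ℕ, 1 ≤ h → h ≤ A →
    LipschitzOnWith LM (fun x => M x h) (Set.Icc xl xu)
  hMm0 : ∀ x ∈ Set.Icc xl xu, m0 ≤ ∑ h ∈ Finset.Icc 1 A, M x h
  /-- `ε0` is small enough that `q₁^ε(x,h) > 0` for all `ε ∈ (0, ε0]`. -/
  hq1pos : ∀ x ∈ Set.Icc xl xu, ∀ h : ℕ, 1 ≤ h → h ≤ A →
    0 < (h : ℝ) * g x / b x - C1B * ε0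

namespace CEADSetup

variable (S : CEADSetup)

/-- The trait space `X = [xl, xu]`. -/
def Xset : Set ℝ := Set.Icc S.xl S.xu

/-- The equilibrium density `z̄ x = (b x − d x)/c x x`. -/
noncomputable def zbar (x : ℝ) : ℝ := (S.b x - S.d x) / S.c x x

/-- `q₁^ε(x,h) = h·g(x)/b(x) − C¹_B·ε`. -/
noncomputable def q1 (ε x : ℝ) (h : ℕ) : ℝ := (h : ℝ) * S.g x / S.b x - S.C1B * ε

/-- `q₂^ε(x,h) = h·g(x)/b(x) + C²_B·ε`. -/
noncomputable def q2 (ε x : ℝ) (h : ℕ) : ℝ := (h : ℝ) * S.g x / S.b x + S.C2B * ε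

/-- `p₁^ε(x) = Σ_{h=1}^{A} q₁^ε(x,h)·M(x,h)`. -/
noncomputable def p1 (ε x : ℝ) : ℝ := ∑ h ∈ Finset.Icc 1 S.A, S.q1 ε x h * S.M x h

/-- `p₂^ε(x) = Σ_{h=1}^{A} q₂^ε(x,h)·M(x,h)`. -/
noncomputable def p2 (ε x : ℝ) : ℝ := ∑ h ∈ Finset.Icc 1 S.A, S.q2 ε x h * S.M x h

/-- `r₁^ε(x,h) = M(x,h)·q₁^ε(x,h)/p₂^ε(x) + 1_{h=1}·(1 − p₁^ε(x)/p₂^ε(x))`. -/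
noncomputable def r1 (ε x : ℝ) (h : ℕ) : ℝ :=
  S.M x h * S.q1 ε x h / S.p2 ε x +
    (if h = 1 then 1 - S.p1 ε x / S.p2 ε x else 0)

/-- `r₂^ε(x,h) = M(x,h)·q₁^ε(x,h)/p₂^ε(x) + 1_{h=A}·(1 − p₁^ε(x)/p₂^ε(x))`. -/
noncomputable def r2 (ε x : ℝ) (h : ℕ) : ℝ :=
  S.M x h * S.q1 ε x h / S.p2 ε x +
    (if h = S.A then 1 - S.p1 ε x / S.p2 ε x else 0)

/-- Cumulative sums `min( Σ_{h=1}^{ℓ} (r₁^ε(x,h) + C^r_Lip·η), 1 )`. -/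
noncomputable def cum1 (ε η x : ℝ) (l : ℕ) : ℝ :=
  min (∑ h ∈ Finset.Icc 1 l, (S.r1 ε x h + (S.CrLip : ℝ) * η)) 1

/-- Cumulative sums `max( Σ_{h=1}^{ℓ} (r₂^ε(x,h) − C^r_Lip·η), 0 )`. -/
noncomputable def cum2 (ε η x : ℝ) (l : ℕ) : ℝ :=
  max (∑ h ∈ Finset.Icc 1 l, (S.r2 ε x h - (S.CrLip : ℝ) * η)) 0

/-- `r̄₁^{ε,η}(x,·)`, defined through its cumulative sums. -/
noncomputable def rbar1 (ε η x : ℝ) (h : ℕ) : ℝ :=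
  S.cum1 ε η x h - S.cum1 ε η x (h - 1)

/-- `r̄₂^{ε,η}(x,·)`, defined through its cumulative sums. -/
noncomputable def rbar2 (ε η x : ℝ) (h : ℕ) : ℝ :=
  S.cum2 ε η x h - S.cum2 ε η x (h - 1)

/-- `x ↦ z̄(x)·b(x)·m(x)·p₁^ε(x)`. -/
noncomputable def a1 (ε x : ℝ) : ℝ := S.zbar x * S.b x * S.m x * S.p1 ε x

/-- `x ↦ z̄(x)·b(x)·m(x)·p₂^ε(x)`. -/
noncomputable def a2 (ε x : ℝ) : ℝ := S.zbar x * S.b x * S.m x * S.p2 ε x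

/-- The right-hand side of the CEAD:
`Σ_{h=1}^{A} h²·m(x)·z̄(x)·g(x)·M(x,h)`. -/
noncomputable def ceadRHS (x : ℝ) : ℝ :=
  ∑ h ∈ Finset.Icc 1 S.A, (h : ℝ) ^ 2 * S.m x * S.zbar x * S.g x * S.M x h

/-- The right-hand side of the lower approximating ODE:
`[ z̄·b·m·p₁^ε − C^a_Lip·η ]·Σ_{h=1}^{A} h·r̄₁^{ε,η}(x,h)`. -/
noncomputable def rhs1 (ε η x : ℝ) : ℝ :=
  (S.a1 ε x - (S.CaLip : ℝ) * η) *
    ∑ h ∈ Finset.Icc 1 S.A, (h : ℝ) * S.rbar1 ε η x h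

/-- The right-hand side of the upper approximating ODE:
`[ z̄·b·m·p₂^ε + C^a_Lip·η ]·Σ_{h=1}^{A} h·r̄₂^{ε,η}(x,h)`. -/
noncomputable def rhs2 (ε η x : ℝ) : ℝ :=
  (S.a2 ε x + (S.CaLip : ℝ) * η) *
    ∑ h ∈ Finset.Icc 1 S.A, (h : ℝ) * S.rbar2 ε η x h

end CEADSetup

open scoped NNReal

section Lipschitz

variable {α : Type*} [PseudoMetricSpace α] {s : Set α} {f g : α → ℝ} {Kf Kg : ℝ≥0}

theorem LipschitzOnWith.exists_mul (hs : IsCompact s) (hf : LipschitzOnWith Kf f s)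
    (hg : LipschitzOnWith Kg g s) : ∃ K, LipschitzOnWith K (fun x => f x * g x) s := by
  obtain ⟨Bf, hBf⟩ := hs.exists_bound_of_continuousOn hf.continuousOn
  obtain ⟨Bg, hBg⟩ := hs.exists_bound_of_continuousOn hg.continuousOn
  refine ⟨_, LipschitzOnWith.of_dist_le' (K := Kf * Bg + Bf * Kg) fun x hx y hy => ?_⟩
  have hfxy := hf.dist_le_mul x hx y hy
  have hgxy := hg.dist_le_mul x hx y hy
  rw [Real.dist_eq] at hfxy hgxy ⊢
  calc |f x * g x - f y * g y| = |(f x - f y) * g x + f y * (g x - g y)| := by ring_nf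
    _ ≤ |f x - f y| * |g x| + |f y| * |g x - g y| := by
      rw [← abs_mul, ← abs_mul]; exact abs_add_le _ _
    _ ≤ Kf * dist x y * Bg + Bf * (Kg * dist x y) :=
      add_le_add (mul_le_mul hfxy (hBg x hx) (abs_nonneg _) (by positivity))
        (mul_le_mul (hBf y hy) hgxy (abs_nonneg _) ((abs_nonneg _).trans (hBf y hy)))
    _ = (Kf * Bg + Bf * Kg) * dist x y := by ring

theorem LipschitzOnWith.exists_inv (hs : IsCompact s) (hf : LipschitzOnWith Kf f s)
    (hf0 : ∀ x ∈ s, f x ≠ 0) : ∃ K, LipschitzOnWith K (fun x => (f x)⁻¹) s := by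
  obtain ⟨B, hB⟩ := hs.exists_bound_of_continuousOn (hf.continuousOn.inv₀ hf0)
  refine ⟨_, LipschitzOnWith.of_dist_le' (K := B * Kf * B) fun x hx y hy => ?_⟩
  have hfxy := hf.dist_le_mul x hx y hy
  rw [Real.dist_eq] at hfxy ⊢
  have hB0 : 0 ≤ B := (norm_nonneg _).trans (hB x hx)
  calc |(f x)⁻¹ - (f y)⁻¹| = |(f x)⁻¹| * |f x - f y| * |(f y)⁻¹| := by
        rw [inv_sub_inv' (hf0 x hx) (hf0 y hy), abs_mul, abs_mul, abs_sub_comm]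
    _ ≤ B * (Kf * dist x y) * B := by
      gcongr
      · exact hB x hx
      · exact hB y hy
    _ = B * Kf * B * dist x y := by ring

theorem LipschitzOnWith.exists_div (hs : IsCompact s) (hf : LipschitzOnWith Kf f s)
    (hg : LipschitzOnWith Kg g s) (hg0 : ∀ x ∈ s, g x ≠ 0) :
    ∃ K, LipschitzOnWith K (fun x => f x / g x) s := by
  obtain ⟨K, hK⟩ := hg.exists_inv hs hg0
  simpa only [div_eq_mul_inv] using hf.exists_mul hs hK

theorem LipschitzOnWith.exists_finset_sum {ι : Type*} {t : Finset ι} {F : ι → α → ℝ}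
    (hF : ∀ i ∈ t, ∃ K, LipschitzOnWith K (F i) s) :
    ∃ K, LipschitzOnWith K (fun x => ∑ i ∈ t, F i x) s := by
  classical
  induction t using Finset.induction_on with
  | empty => exact ⟨0, by simp⟩
  | insert i t hi ih =>
    obtain ⟨Ki, hKi⟩ := hF i (Finset.mem_insert_self i t)
    obtain ⟨Kt, hKt⟩ := ih fun j hj => hF j (Finset.mem_insert_of_mem hj)
    exact ⟨Ki + Kt, by simpa only [Finset.sum_insert hi] using hKi.add hKt⟩

end Lipschitz

theorem Real.exp_sub_one_le_mul_exp (x : ℝ) : Real.exp x - 1 ≤ x * Real.exp x := by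
  have h := mul_le_mul_of_nonneg_right (Real.add_one_le_exp (-x)) (Real.exp_pos x).le
  rw [← Real.exp_add, neg_add_cancel, Real.exp_zero] at h
  linarith

theorem gronwallBound_zero_le_mul_exp {K δ : ℝ} (hK : 0 ≤ K) (hδ : 0 ≤ δ) (x : ℝ) :
    gronwallBound 0 K δ x ≤ δ * x * Real.exp (K * x) := by
  rcases hK.eq_or_lt with rfl | hK
  · simp [gronwallBound_K0]
  rw [gronwallBound_of_K_ne_0 hK.ne']
  calc 0 * Real.exp (K * x) + δ / K * (Real.exp (K * x) - 1)
      ≤ δ / K * (K * x * Real.exp (K * x)) := by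
        rw [zero_mul, zero_add]; gcongr; exact Real.exp_sub_one_le_mul_exp _
    _ = δ * x * Real.exp (K * x) := by field_simp

theorem abs_sub_le_of_approx_trajectory {v : ℝ → ℝ} {s : Set ℝ} {K : ℝ≥0}
    (hv : LipschitzOnWith K v s) {f f' g : ℝ → ℝ} {δ T : ℝ}
    (hf : ∀ t ∈ Set.Icc 0 T, HasDerivAt f (f' t) t)
    (hfv : ∀ t ∈ Set.Icc 0 T, |f' t - v (f t)| ≤ δ) (hfs : ∀ t ∈ Set.Icc 0 T, f t ∈ s)
    (hg : ∀ t ∈ Set.Icc 0 T, HasDerivAt g (v (g t)) t) (hgs : ∀ t ∈ Set.Icc 0 T, g t ∈ s)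
    (h0 : f 0 = g 0) : ∀ t ∈ Set.Icc 0 T, |f t - g t| ≤ δ * T * Real.exp (K * T) := by
  intro t ht
  have hδ : 0 ≤ δ := (abs_nonneg _).trans (hfv t ht)
  have hIco : Set.Ico 0 T ⊆ Set.Icc 0 T := Set.Ico_subset_Icc_self
  have hdist := dist_le_of_approx_trajectories_ODE_of_mem (v := fun _ => v) (s := fun _ => s)
    (fun _ _ => hv) (fun t ht => (hf t ht).continuousAt.continuousWithinAt)
    (fun t ht => (hf t (hIco ht)).hasDerivWithinAt)
    (fun t ht => (Real.dist_eq _ _).trans_le (hfv t (hIco ht))) (fun t ht => hfs t (hIco ht))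
    (fun t ht => (hg t ht).continuousAt.continuousWithinAt)
    (fun t ht => (hg t (hIco ht)).hasDerivWithinAt) (fun t _ => (dist_self _).le)
    (fun t ht => hgs t (hIco ht)) (dist_le_zero.2 h0) t ht
  rw [Real.dist_eq, add_zero, sub_zero] at hdist
  calc |f t - g t| ≤ δ * t * Real.exp (K * t) :=
        hdist.trans (gronwallBound_zero_le_mul_exp K.2 hδ t)
    _ ≤ δ * T * Real.exp (K * T) :=
      mul_le_mul (mul_le_mul_of_nonneg_left ht.2 hδ)
        (Real.exp_le_exp.2 (mul_le_mul_of_nonneg_left ht.2 K.2)) (Real.exp_pos _).le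
        (mul_nonneg hδ (ht.1.trans ht.2))

section PartialSums

variable {r : ℕ → ℝ} {A : ℕ}

theorem sum_Icc_one_sub_sum_Icc_one_pred {h : ℕ} (hh : 1 ≤ h) :
    ∑ i ∈ Finset.Icc 1 h, r i - ∑ i ∈ Finset.Icc 1 (h - 1), r i = r h := by
  obtain ⟨k, rfl⟩ := Nat.exists_eq_add_of_le' hh
  rw [Nat.add_sub_cancel, Finset.sum_Icc_succ_top (by omega)]
  ring

theorem abs_increment_sub_le_of_forall_sub_mem_Icc {F G : ℕ → ℝ} {c D : ℝ}
    (hGF : ∀ l ≤ A, G l - F l ∈ Set.Icc c (c + D)) {h : ℕ} (hh : h ≤ A) :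
    |(G h - G (h - 1)) - (F h - F (h - 1))| ≤ D := by
  have h1 := hGF h hh
  have h2 := hGF (h - 1) (by omega)
  rw [abs_le]
  constructor <;> linarith [h1.1, h1.2, h2.1, h2.2]

theorem sum_Icc_one_mem_Icc (hr0 : ∀ h ∈ Finset.Icc 1 A, 0 ≤ r h)
    (hr1 : ∑ h ∈ Finset.Icc 1 A, r h = 1) {l : ℕ} (hl : l ≤ A) :
    ∑ h ∈ Finset.Icc 1 l, r h ∈ Set.Icc 0 1 := by
  have hsub : Finset.Icc 1 l ⊆ Finset.Icc 1 A := Finset.Icc_subset_Icc_right hl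
  refine ⟨Finset.sum_nonneg fun h hh => hr0 h (hsub hh), hr1 ▸ ?_⟩
  exact Finset.sum_le_sum_of_subset_of_nonneg hsub fun h hh _ => hr0 h hh

theorem abs_min_sum_add_increment_sub_le (hr0 : ∀ h ∈ Finset.Icc 1 A, 0 ≤ r h)
    (hr1 : ∑ h ∈ Finset.Icc 1 A, r h = 1) {δ : ℝ} (hδ : 0 ≤ δ) {h : ℕ}
    (hh : h ∈ Finset.Icc 1 A) :
    |(min (∑ i ∈ Finset.Icc 1 h, (r i + δ)) 1 - min (∑ i ∈ Finset.Icc 1 (h - 1), (r i + δ)) 1)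
      - r h| ≤ A * δ := by
  rw [Finset.mem_Icc] at hh
  rw [← sum_Icc_one_sub_sum_Icc_one_pred (r := r) hh.1]
  refine abs_increment_sub_le_of_forall_sub_mem_Icc (F := fun l => ∑ i ∈ Finset.Icc 1 l, r i)
    (G := fun l => min (∑ i ∈ Finset.Icc 1 l, (r i + δ)) 1) (c := 0) (fun l hl => ?_) hh.2
  have hF := sum_Icc_one_mem_Icc hr0 hr1 hl
  have hlA : (l : ℝ) * δ ≤ A * δ := by gcongr
  rw [Finset.sum_add_distrib, Finset.sum_const, Nat.card_Icc, Nat.add_sub_cancel, nsmul_eq_mul]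
  constructor
  · have := le_min (le_add_of_nonneg_right (by positivity : (0 : ℝ) ≤ l * δ)) hF.2
    linarith
  · have := min_le_left (∑ i ∈ Finset.Icc 1 l, r i + l * δ) 1
    linarith

theorem abs_max_sum_sub_increment_sub_le (hr0 : ∀ h ∈ Finset.Icc 1 A, 0 ≤ r h)
    (hr1 : ∑ h ∈ Finset.Icc 1 A, r h = 1) {δ : ℝ} (hδ : 0 ≤ δ) {h : ℕ}
    (hh : h ∈ Finset.Icc 1 A) :
    |(max (∑ i ∈ Finset.Icc 1 h, (r i - δ)) 0 - max (∑ i ∈ Finset.Icc 1 (h - 1), (r i - δ)) 0)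
      - r h| ≤ A * δ := by
  rw [Finset.mem_Icc] at hh
  rw [← sum_Icc_one_sub_sum_Icc_one_pred (r := r) hh.1]
  refine abs_increment_sub_le_of_forall_sub_mem_Icc (F := fun l => ∑ i ∈ Finset.Icc 1 l, r i)
    (G := fun l => max (∑ i ∈ Finset.Icc 1 l, (r i - δ)) 0) (c := -(A * δ)) (fun l hl => ?_) hh.2
  have hF := sum_Icc_one_mem_Icc hr0 hr1 hl
  have hlA : (l : ℝ) * δ ≤ A * δ := by gcongr
  rw [Finset.sum_sub_distrib, Finset.sum_const, Nat.card_Icc, Nat.add_sub_cancel, nsmul_eq_mul]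
  constructor
  · have := le_max_left (∑ i ∈ Finset.Icc 1 l, r i - l * δ) 0
    linarith
  · have := max_le (sub_le_self _ (by positivity : (0 : ℝ) ≤ l * δ)) hF.1
    linarith

end PartialSums

namespace CEADSetup

variable (S : CEADSetup)

theorem isCompact_Xset : IsCompact S.Xset := isCompact_Icc

/-! The `ε = 0` limits `q₀(x,h) = h g(x)/b(x)`, `p₀ = Σ q₀ M`, `r₀ = M q₀/p₀` of `q_j^ε`,
`p_j^ε`, `r_j^ε`, and `a₀ = z̄ b m p₀`; the CEAD drift is `a₀ · Σ h r₀`. -/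

noncomputable def q0 (x : ℝ) (h : ℕ) : ℝ := h * S.g x / S.b x

noncomputable def Mtot (x : ℝ) : ℝ := ∑ h ∈ Finset.Icc 1 S.A, S.M x h

noncomputable def p0 (x : ℝ) : ℝ := ∑ h ∈ Finset.Icc 1 S.A, S.q0 x h * S.M x h

noncomputable def r0 (x : ℝ) (h : ℕ) : ℝ := S.M x h * S.q0 x h / S.p0 x

noncomputable def a0 (x : ℝ) : ℝ := S.zbar x * S.b x * S.m x * S.p0 x

/-- `r₁^ε` and `r₂^ε` are the cases `k = 1` and `k = A`. -/
noncomputable def rDefectAt (ε x : ℝ) (k h : ℕ) : ℝ :=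
  S.M x h * S.q1 ε x h / S.p2 ε x + if h = k then 1 - S.p1 ε x / S.p2 ε x else 0

theorem p1_eq (ε x : ℝ) : S.p1 ε x = S.p0 x - S.C1B * ε * S.Mtot x := by
  simp only [p1, p0, Mtot, q1, Finset.mul_sum, ← Finset.sum_sub_distrib]
  exact Finset.sum_congr rfl fun h _ => by rw [q0]; ring

theorem p2_eq (ε x : ℝ) : S.p2 ε x = S.p0 x + S.C2B * ε * S.Mtot x := by
  simp only [p2, p0, Mtot, q2, Finset.mul_sum, ← Finset.sum_add_distrib]
  exact Finset.sum_congr rfl fun h _ => by rw [q0]; ring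

theorem a1_sub_a0 (S : CEADSetup) (ε x : ℝ) :
    S.a1 ε x - S.a0 x = ε * (-S.C1B * (S.zbar x * S.b x * S.m x * S.Mtot x)) := by
  rw [a1, a0, p1_eq]
  ring

theorem a2_sub_a0 (S : CEADSetup) (ε x : ℝ) :
    S.a2 ε x - S.a0 x = ε * (S.C2B * (S.zbar x * S.b x * S.m x * S.Mtot x)) := by
  rw [a2, a0, p2_eq]
  ring

variable {S} {ε x : ℝ} {h : ℕ}

theorem Mtot_pos (hx : x ∈ S.Xset) : 0 < S.Mtot x := S.hm0.trans_le (S.hMm0 x hx)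

theorem p0_pos (hx : x ∈ S.Xset) : 0 < S.p0 x := by
  have hgb : 0 < S.g x / S.b x := div_pos (S.hθ.trans_le (S.hgθ x hx)) (S.hbpos x hx)
  calc 0 < S.g x / S.b x * S.Mtot x := mul_pos hgb (Mtot_pos hx)
    _ ≤ S.p0 x := by
      rw [Mtot, Finset.mul_sum]
      refine Finset.sum_le_sum fun h hh => ?_
      have h1 : (1 : ℝ) ≤ h := by exact_mod_cast (Finset.mem_Icc.1 hh).1
      rw [q0, mul_div_assoc]
      exact mul_le_mul_of_nonneg_right (le_mul_of_one_le_left hgb.le h1) (S.hMnn x hx h)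

theorem p0_le_p2 (hε : 0 ≤ ε) (hx : x ∈ S.Xset) : S.p0 x ≤ S.p2 ε x := by
  rw [p2_eq]
  exact le_add_of_nonneg_right (mul_nonneg (mul_nonneg S.hC2B.le hε) (Mtot_pos hx).le)

theorem p2_pos (hε : 0 ≤ ε) (hx : x ∈ S.Xset) : 0 < S.p2 ε x :=
  (p0_pos hx).trans_le (p0_le_p2 hε hx)

theorem p1_le_p2 (hε : 0 ≤ ε) (hx : x ∈ S.Xset) : S.p1 ε x ≤ S.p2 ε x := by
  rw [p1_eq]
  exact (sub_le_self _ (mul_nonneg (mul_nonneg S.hC1B.le hε) (Mtot_pos hx).le)).trans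
    (p0_le_p2 hε hx)

theorem q1_pos (hε : ε ∈ Set.Ioc 0 S.ε0) (hx : x ∈ S.Xset) (hh : h ∈ Finset.Icc 1 S.A) :
    0 < S.q1 ε x h := by
  rw [Finset.mem_Icc] at hh
  have := S.hq1pos x hx h hh.1 hh.2
  have := mul_le_mul_of_nonneg_left hε.2 S.hC1B.le
  rw [q1]
  linarith

theorem rDefectAt_nonneg (hε : ε ∈ Set.Ioc 0 S.ε0) (hx : x ∈ S.Xset) (k : ℕ)
    (hh : h ∈ Finset.Icc 1 S.A) : 0 ≤ S.rDefectAt ε x k h := by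
  have hp2 := p2_pos hε.1.le hx
  have hdefect : 0 ≤ 1 - S.p1 ε x / S.p2 ε x :=
    sub_nonneg.2 (div_le_one_of_le₀ (p1_le_p2 hε.1.le hx) hp2.le)
  refine add_nonneg (div_nonneg (mul_nonneg (S.hMnn x hx h) (q1_pos hε hx hh).le) hp2.le) ?_
  split_ifs
  exacts [hdefect, le_rfl]

theorem sum_rDefectAt {k : ℕ} (hk : k ∈ Finset.Icc 1 S.A) :
    ∑ h ∈ Finset.Icc 1 S.A, S.rDefectAt ε x k h = 1 := by
  simp only [rDefectAt, Finset.sum_add_distrib, Finset.sum_ite_eq', if_pos hk, ← Finset.sum_div]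
  rw [p1]
  simp only [mul_comm (S.M x _)]
  ring

theorem abs_rbar1_sub_r1_le {η : ℝ} (hε : ε ∈ Set.Ioc 0 S.ε0) (hη : 0 ≤ η) (hx : x ∈ S.Xset)
    (hh : h ∈ Finset.Icc 1 S.A) : |S.rbar1 ε η x h - S.r1 ε x h| ≤ S.A * S.CrLip * η := by
  rw [mul_assoc]
  exact abs_min_sum_add_increment_sub_le (fun h hh => rDefectAt_nonneg hε hx 1 hh)
    (sum_rDefectAt (Finset.mem_Icc.2 ⟨le_rfl, S.hA⟩)) (by positivity) hh

theorem abs_rbar2_sub_r2_le {η : ℝ} (hε : ε ∈ Set.Ioc 0 S.ε0) (hη : 0 ≤ η) (hx : x ∈ S.Xset)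
    (hh : h ∈ Finset.Icc 1 S.A) : |S.rbar2 ε η x h - S.r2 ε x h| ≤ S.A * S.CrLip * η := by
  rw [mul_assoc]
  exact abs_max_sum_sub_increment_sub_le (fun h hh => rDefectAt_nonneg hε hx S.A hh)
    (sum_rDefectAt (Finset.mem_Icc.2 ⟨S.hA, le_rfl⟩)) (by positivity) hh

theorem ceadRHS_eq (hx : x ∈ S.Xset) :
    S.ceadRHS x = S.a0 x * ∑ h ∈ Finset.Icc 1 S.A, h * S.r0 x h := by
  have hb := (S.hbpos x hx).ne'
  have hp0 := (p0_pos hx).ne'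
  rw [ceadRHS, Finset.mul_sum]
  refine Finset.sum_congr rfl fun h _ => ?_
  rw [a0, r0, q0]
  field_simp

variable (S) in
theorem rDefectAt_sub_r0_eq {ε x : ℝ} (hε : 0 ≤ ε) (hx : x ∈ S.Xset) (k h : ℕ) :
    S.rDefectAt ε x k h - S.r0 x h =
      ε * (-(S.M x h * (S.C1B * S.p0 x + S.C2B * S.q0 x h * S.Mtot x) / S.p0 x)
        + if h = k then (S.C1B + S.C2B) * S.Mtot x else 0) * (S.p2 ε x)⁻¹ := by
  have hp0 := (p0_pos hx).ne'
  have hp2 := (p2_pos hε hx).ne'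
  have hmain : S.M x h * S.q1 ε x h / S.p2 ε x - S.M x h * S.q0 x h / S.p0 x =
      ε * -(S.M x h * (S.C1B * S.p0 x + S.C2B * S.q0 x h * S.Mtot x) / S.p0 x)
        * (S.p2 ε x)⁻¹ := by
    rw [q1, ← q0]
    field_simp
    linear_combination (-(S.M x h * S.q0 x h)) * S.p2_eq ε x
  have hdefect : 1 - S.p1 ε x / S.p2 ε x = ε * ((S.C1B + S.C2B) * S.Mtot x) * (S.p2 ε x)⁻¹ := by
    rw [p1_eq]
    field_simp
    linear_combination S.p2_eq ε x
  rw [rDefectAt, r0]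
  split_ifs
  · linear_combination hmain + hdefect
  · linear_combination hmain

variable (S)

theorem lipschitzOnWith_M {h : ℕ} (hh : h ∈ Finset.Icc 1 S.A) :
    LipschitzOnWith S.LM (fun x => S.M x h) S.Xset :=
  S.hLM h (Finset.mem_Icc.1 hh).1 (Finset.mem_Icc.1 hh).2

theorem exists_lipschitzOnWith_zbar : ∃ K, LipschitzOnWith K S.zbar S.Xset :=
  (S.hLb.sub S.hLd).exists_div S.isCompact_Xset
    (S.hLc.comp (LipschitzWith.id.prodMk LipschitzWith.id).lipschitzOnWith fun _ hx => ⟨hx, hx⟩)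
    fun x hx => (S.hcpos x hx x hx).ne'

theorem exists_lipschitzOnWith_ceadRHS : ∃ K, LipschitzOnWith K S.ceadRHS S.Xset := by
  obtain ⟨Kz, hz⟩ := S.exists_lipschitzOnWith_zbar
  have hX := S.isCompact_Xset
  refine LipschitzOnWith.exists_finset_sum fun h hh => ?_
  obtain ⟨K₁, h₁⟩ := (LipschitzWith.const ((h : ℝ) ^ 2)).lipschitzOnWith.exists_mul hX S.hLm
  obtain ⟨K₂, h₂⟩ := h₁.exists_mul hX hz
  obtain ⟨K₃, h₃⟩ := h₂.exists_mul hX S.hLg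
  exact h₃.exists_mul hX (S.lipschitzOnWith_M hh)

theorem continuousOn_zbar : ContinuousOn S.zbar S.Xset :=
  S.exists_lipschitzOnWith_zbar.choose_spec.continuousOn

theorem continuousOn_Mtot : ContinuousOn S.Mtot S.Xset :=
  continuousOn_finsetSum _ fun _ hh => (S.lipschitzOnWith_M hh).continuousOn

theorem continuousOn_q0 (h : ℕ) : ContinuousOn (fun x => S.q0 x h) S.Xset :=
  (continuousOn_const.mul S.hLg.continuousOn).div S.hLb.continuousOn fun x hx =>
    (S.hbpos x hx).ne'

theorem continuousOn_p0 : ContinuousOn S.p0 S.Xset :=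
  continuousOn_finsetSum _ fun h hh =>
    (S.continuousOn_q0 h).mul (S.lipschitzOnWith_M hh).continuousOn

theorem continuousOn_r0 {h : ℕ} (hh : h ∈ Finset.Icc 1 S.A) :
    ContinuousOn (fun x => S.r0 x h) S.Xset :=
  ((S.lipschitzOnWith_M hh).continuousOn.mul (S.continuousOn_q0 h)).div S.continuousOn_p0
    fun _ hx => (p0_pos hx).ne'

theorem continuousOn_a0 : ContinuousOn S.a0 S.Xset :=
  ((S.continuousOn_zbar.mul S.hLb.continuousOn).mul S.hLm.continuousOn).mul S.continuousOn_p0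

theorem continuousOn_zbar_mul_b_mul_m_mul_Mtot :
    ContinuousOn (fun x => S.zbar x * S.b x * S.m x * S.Mtot x) S.Xset :=
  ((S.continuousOn_zbar.mul S.hLb.continuousOn).mul S.hLm.continuousOn).mul S.continuousOn_Mtot

end CEADSetup

section Asymptotics

open Asymptotics Filter

variable {ι : Type*} {l : Filter ι}

theorem Asymptotics.IsBigO.mul_isBigO_one {f g w : ι → ℝ} (hf : f =O[l] w)
    (hg : g =O[l] fun _ => (1 : ℝ)) : (fun i => f i * g i) =O[l] w := by
  simpa using hf.mul hg

theorem ContinuousOn.isBigO_one_comp {α : Type*} [TopologicalSpace α] {s : Set α} {f : α → ℝ}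
    (hf : ContinuousOn f s) (hs : IsCompact s) {y : ι → α} (hy : ∀ᶠ i in l, y i ∈ s) :
    (fun i => f (y i)) =O[l] fun _ => (1 : ℝ) :=
  (hf.isBigO_principal hs (by norm_num)).comp_tendsto (tendsto_principal.2 hy)

theorem isBigO_add_left_of_nonneg {u v : ι → ℝ} (hu : ∀ᶠ i in l, 0 ≤ u i)
    (hv : ∀ᶠ i in l, 0 ≤ v i) : u =O[l] fun i => u i + v i :=
  IsBigO.of_bound' <| by
    filter_upwards [hu, hv] with i hui hvi
    rw [Real.norm_of_nonneg hui, Real.norm_of_nonneg (add_nonneg hui hvi)]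
    linarith

theorem isBigO_add_right_of_nonneg {u v : ι → ℝ} (hu : ∀ᶠ i in l, 0 ≤ u i)
    (hv : ∀ᶠ i in l, 0 ≤ v i) : v =O[l] fun i => u i + v i := by
  simpa only [add_comm] using isBigO_add_left_of_nonneg hv hu

theorem isBigO_mul_sub_mul {a a' s s' w : ι → ℝ} (ha : (fun i => a' i - a i) =O[l] w)
    (hs : (fun i => s' i - s i) =O[l] w) (ha₀ : a =O[l] fun _ => (1 : ℝ))
    (hs₀ : s =O[l] fun _ => (1 : ℝ)) (hw : w =O[l] fun _ => (1 : ℝ)) :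
    (fun i => a' i * s' i - a i * s i) =O[l] w := by
  have hs' : s' =O[l] fun _ => (1 : ℝ) := by simpa using hs₀.add (hs.trans hw)
  refine ((ha.mul_isBigO_one hs').add (hs.mul_isBigO_one ha₀)).congr_left fun i => ?_
  ring

end Asymptotics

namespace CEADSetup

open Asymptotics Filter

variable {S : CEADSetup} {ι : Type*} {l : Filter ι} {ε η y : ι → ℝ}

theorem isBigO_mul_comp_of_continuousOn {w : ι → ℝ} {G : ℝ → ℝ} (hG : ContinuousOn G S.Xset)
    (hy : ∀ᶠ i in l, y i ∈ S.Xset) : (fun i => w i * G (y i)) =O[l] w :=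
  (isBigO_refl w l).mul_isBigO_one (hG.isBigO_one_comp S.isCompact_Xset hy)

theorem isBigO_inv_p2 (hε : ∀ᶠ i in l, ε i ∈ Set.Ioc 0 S.ε0) (hy : ∀ᶠ i in l, y i ∈ S.Xset) :
    (fun i => (S.p2 (ε i) (y i))⁻¹) =O[l] fun _ => (1 : ℝ) := by
  refine IsBigO.trans (IsBigO.of_bound' ?_)
    ((S.continuousOn_p0.inv₀ fun _ hx => (p0_pos hx).ne').isBigO_one_comp S.isCompact_Xset hy)
  filter_upwards [hε, hy] with i hεi hyi
  rw [Pi.inv_apply, Real.norm_of_nonneg (inv_nonneg.2 (p2_pos hεi.1.le hyi).le),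
    Real.norm_of_nonneg (inv_nonneg.2 (p0_pos hyi).le)]
  exact inv_anti₀ (p0_pos hyi) (p0_le_p2 hεi.1.le hyi)

theorem isBigO_rDefectAt_sub_r0 (hε : ∀ᶠ i in l, ε i ∈ Set.Ioc 0 S.ε0)
    (hy : ∀ᶠ i in l, y i ∈ S.Xset) (k : ℕ) {h : ℕ} (hh : h ∈ Finset.Icc 1 S.A) :
    (fun i => S.rDefectAt (ε i) (y i) k h - S.r0 (y i) h) =O[l] ε := by
  have hM := (S.lipschitzOnWith_M hh).continuousOn
  have hF : ContinuousOn (fun x => -(S.M x h * (S.C1B * S.p0 x + S.C2B * S.q0 x h * S.Mtot x)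
      / S.p0 x) + if h = k then (S.C1B + S.C2B) * S.Mtot x else 0) S.Xset := by
    refine ContinuousOn.add (ContinuousOn.neg ?_) ?_
    · exact (hM.mul ((continuousOn_const.mul S.continuousOn_p0).add
        ((continuousOn_const.mul (S.continuousOn_q0 h)).mul S.continuousOn_Mtot))).div
          S.continuousOn_p0 fun _ hx => (p0_pos hx).ne'
    · split_ifs
      exacts [continuousOn_const.mul S.continuousOn_Mtot, continuousOn_const]
  refine ((isBigO_mul_comp_of_continuousOn hF hy).mul_isBigO_one (isBigO_inv_p2 hε hy)).congr' ?_
    EventuallyEq.rfl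
  filter_upwards [hε, hy] with i hεi hyi
  exact (S.rDefectAt_sub_r0_eq hεi.1.le hyi k h).symm

theorem isBigO_weightedSum_sub_r0 (hε : ∀ᶠ i in l, ε i ∈ Set.Ioc 0 S.ε0)
    (hη : ∀ᶠ i in l, η i ∈ Set.Ioc 0 S.ε0) (hy : ∀ᶠ i in l, y i ∈ S.Xset) (k : ℕ)
    {rb : ι → ℕ → ℝ}
    (hrb : ∀ h ∈ Finset.Icc 1 S.A, (fun i => rb i h - S.rDefectAt (ε i) (y i) k h) =O[l] η) :
    (fun i => ∑ h ∈ Finset.Icc 1 S.A, h * rb i h - ∑ h ∈ Finset.Icc 1 S.A, h * S.r0 (y i) h)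
      =O[l] fun i => η i + ε i := by
  have hη₀ : ∀ᶠ i in l, 0 ≤ η i := hη.mono fun _ hi => hi.1.le
  have hε₀ : ∀ᶠ i in l, 0 ≤ ε i := hε.mono fun _ hi => hi.1.le
  simp only [← Finset.sum_sub_distrib, ← mul_sub]
  refine IsBigO.fun_sum fun h hh => IsBigO.const_mul_left ?_ _
  refine (((hrb h hh).trans (isBigO_add_left_of_nonneg hη₀ hε₀)).add
    ((isBigO_rDefectAt_sub_r0 hε hy k hh).trans (isBigO_add_right_of_nonneg hη₀ hε₀))).congr_left
      fun i => by ring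

theorem isBigO_drift_sub_ceadRHS (hε : ∀ᶠ i in l, ε i ∈ Set.Ioc 0 S.ε0)
    (hη : ∀ᶠ i in l, η i ∈ Set.Ioc 0 S.ε0) (hy : ∀ᶠ i in l, y i ∈ S.Xset) {a : ι → ℝ}
    (ha : (fun i => a i - S.a0 (y i)) =O[l] fun i => η i + ε i) (k : ℕ) {rb : ι → ℕ → ℝ}
    (hrb : ∀ h ∈ Finset.Icc 1 S.A, (fun i => rb i h - S.rDefectAt (ε i) (y i) k h) =O[l] η) :
    (fun i => a i * ∑ h ∈ Finset.Icc 1 S.A, h * rb i h - S.ceadRHS (y i))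
      =O[l] fun i => η i + ε i := by
  have hbdd : (fun i => η i + ε i) =O[l] fun _ => (1 : ℝ) :=
    continuousOn_id.isBigO_one_comp (isCompact_Icc (a := 0) (b := 2 * S.ε0)) <|
      (hη.and hε).mono fun _ hi => ⟨by linarith [hi.1.1, hi.2.1], by linarith [hi.1.2, hi.2.2]⟩
  have hr0 : ContinuousOn (fun x => ∑ h ∈ Finset.Icc 1 S.A, (h : ℝ) * S.r0 x h) S.Xset :=
    continuousOn_finsetSum _ fun h hh => continuousOn_const.mul (S.continuousOn_r0 hh)
  refine (isBigO_mul_sub_mul ha (isBigO_weightedSum_sub_r0 hε hη hy k hrb)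
    (S.continuousOn_a0.isBigO_one_comp S.isCompact_Xset hy)
    (hr0.isBigO_one_comp S.isCompact_Xset hy) hbdd).congr' ?_ EventuallyEq.rfl
  filter_upwards [hy] with i hyi
  rw [ceadRHS_eq hyi]

theorem isBigO_rbar1_sub_r1 (hε : ∀ᶠ i in l, ε i ∈ Set.Ioc 0 S.ε0)
    (hη : ∀ᶠ i in l, η i ∈ Set.Ioc 0 S.ε0) (hy : ∀ᶠ i in l, y i ∈ S.Xset) {h : ℕ}
    (hh : h ∈ Finset.Icc 1 S.A) :
    (fun i => S.rbar1 (ε i) (η i) (y i) h - S.r1 (ε i) (y i) h) =O[l] η :=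
  IsBigO.of_bound (S.A * S.CrLip) <| by
    filter_upwards [hε, hη, hy] with i hεi hηi hyi
    rw [Real.norm_eq_abs, Real.norm_of_nonneg hηi.1.le]
    exact abs_rbar1_sub_r1_le hεi hηi.1.le hyi hh

theorem isBigO_rbar2_sub_r2 (hε : ∀ᶠ i in l, ε i ∈ Set.Ioc 0 S.ε0)
    (hη : ∀ᶠ i in l, η i ∈ Set.Ioc 0 S.ε0) (hy : ∀ᶠ i in l, y i ∈ S.Xset) {h : ℕ}
    (hh : h ∈ Finset.Icc 1 S.A) :
    (fun i => S.rbar2 (ε i) (η i) (y i) h - S.r2 (ε i) (y i) h) =O[l] η :=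
  IsBigO.of_bound (S.A * S.CrLip) <| by
    filter_upwards [hε, hη, hy] with i hεi hηi hyi
    rw [Real.norm_eq_abs, Real.norm_of_nonneg hηi.1.le]
    exact abs_rbar2_sub_r2_le hεi hηi.1.le hyi hh

theorem isBigO_rhs1_sub_ceadRHS (hε : ∀ᶠ i in l, ε i ∈ Set.Ioc 0 S.ε0)
    (hη : ∀ᶠ i in l, η i ∈ Set.Ioc 0 S.ε0) (hy : ∀ᶠ i in l, y i ∈ S.Xset) :
    (fun i => S.rhs1 (ε i) (η i) (y i) - S.ceadRHS (y i)) =O[l] fun i => η i + ε i := by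
  have hη₀ : ∀ᶠ i in l, 0 ≤ η i := hη.mono fun _ hi => hi.1.le
  have hε₀ : ∀ᶠ i in l, 0 ≤ ε i := hε.mono fun _ hi => hi.1.le
  have hε_le := isBigO_add_right_of_nonneg hη₀ hε₀
  have hη_le := isBigO_add_left_of_nonneg hη₀ hε₀
  have ha : (fun i => S.a1 (ε i) (y i) - S.CaLip * η i - S.a0 (y i)) =O[l]
      fun i => η i + ε i := by
    simp only [sub_right_comm _ (_ * η _), S.a1_sub_a0]
    exact ((isBigO_mul_comp_of_continuousOn
      (continuousOn_const.mul S.continuousOn_zbar_mul_b_mul_m_mul_Mtot) hy).trans hε_le).sub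
      ((isBigO_const_mul_self _ η l).trans hη_le)
  exact isBigO_drift_sub_ceadRHS hε hη hy ha 1 fun h hh => isBigO_rbar1_sub_r1 hε hη hy hh

theorem isBigO_rhs2_sub_ceadRHS (hε : ∀ᶠ i in l, ε i ∈ Set.Ioc 0 S.ε0)
    (hη : ∀ᶠ i in l, η i ∈ Set.Ioc 0 S.ε0) (hy : ∀ᶠ i in l, y i ∈ S.Xset) :
    (fun i => S.rhs2 (ε i) (η i) (y i) - S.ceadRHS (y i)) =O[l] fun i => η i + ε i := by
  have hη₀ : ∀ᶠ i in l, 0 ≤ η i := hη.mono fun _ hi => hi.1.le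
  have hε₀ : ∀ᶠ i in l, 0 ≤ ε i := hε.mono fun _ hi => hi.1.le
  have hε_le := isBigO_add_right_of_nonneg hη₀ hε₀
  have hη_le := isBigO_add_left_of_nonneg hη₀ hε₀
  have ha : (fun i => S.a2 (ε i) (y i) + S.CaLip * η i - S.a0 (y i)) =O[l]
      fun i => η i + ε i := by
    simp only [add_sub_right_comm _ (_ * η _), S.a2_sub_a0]
    exact ((isBigO_mul_comp_of_continuousOn
      (continuousOn_const.mul S.continuousOn_zbar_mul_b_mul_m_mul_Mtot) hy).trans hε_le).add
      ((isBigO_const_mul_self _ η l).trans hη_le)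
  exact isBigO_drift_sub_ceadRHS hε hη hy ha S.A fun h hh => isBigO_rbar2_sub_r2 hε hη hy hh

variable (S) in
theorem exists_abs_rhs_sub_ceadRHS_le : ∃ C, 0 ≤ C ∧ ∀ ε η : ℝ, ε ∈ Set.Ioc 0 S.ε0 →
    η ∈ Set.Ioc 0 S.ε0 → ∀ y ∈ S.Xset,
      |S.rhs1 ε η y - S.ceadRHS y| ≤ C * (η + ε) ∧ |S.rhs2 ε η y - S.ceadRHS y| ≤ C * (η + ε) := by
  set P : Set (ℝ × ℝ × ℝ) := {p | p.1 ∈ Set.Ioc 0 S.ε0 ∧ p.2.1 ∈ Set.Ioc 0 S.ε0 ∧ p.2.2 ∈ S.Xset}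
  have hε : ∀ᶠ p in 𝓟 P, p.1 ∈ Set.Ioc 0 S.ε0 := eventually_principal.2 fun _ hp => hp.1
  have hη : ∀ᶠ p in 𝓟 P, p.2.1 ∈ Set.Ioc 0 S.ε0 := eventually_principal.2 fun _ hp => hp.2.1
  have hy : ∀ᶠ p in 𝓟 P, p.2.2 ∈ S.Xset := eventually_principal.2 fun _ hp => hp.2.2
  obtain ⟨c₁, hc₁, h₁⟩ := (isBigO_rhs1_sub_ceadRHS hε hη hy).exists_nonneg
  obtain ⟨c₂, hc₂, h₂⟩ := (isBigO_rhs2_sub_ceadRHS hε hη hy).exists_nonneg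
  refine ⟨max c₁ c₂, le_max_of_le_left hc₁, fun ε η hε hη y hy => ?_⟩
  have hpos : 0 < η + ε := add_pos hη.1 hε.1
  have hw : |η + ε| = η + ε := abs_of_pos hpos
  have hmem : (ε, η, y) ∈ P := ⟨hε, hη, hy⟩
  have b₁ := isBigOWith_principal.1 h₁ _ hmem
  have b₂ := isBigOWith_principal.1 h₂ _ hmem
  simp only [Real.norm_eq_abs, hw] at b₁ b₂
  exact ⟨b₁.trans (mul_le_mul_of_nonneg_right (le_max_left _ _) hpos.le),
    b₂.trans (mul_le_mul_of_nonneg_right (le_max_right _ _) hpos.le)⟩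

end CEADSetup

theorem stmt18_general (S : CEADSetup) :
    ∃ C : ℝ, 0 < C ∧
      ∀ ε η : ℝ, ε ∈ Set.Ioc (0 : ℝ) S.ε0 → η ∈ Set.Ioc (0 : ℝ) S.ε0 →
        (∀ x ∈ S.Xset, 0 < S.a1 ε x - (S.CaLip : ℝ) * η) →
        ∀ x₀ ∈ S.Xset, ∀ T : ℝ, 0 < T →
        ∀ x x1 x2 : ℝ → ℝ,
          x 0 = x₀ → x1 0 = x₀ → x2 0 = x₀ →
          (∀ t ∈ Set.Icc (0 : ℝ) T, x t ∈ S.Xset) →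
          (∀ t ∈ Set.Icc (0 : ℝ) T, x1 t ∈ S.Xset) →
          (∀ t ∈ Set.Icc (0 : ℝ) T, x2 t ∈ S.Xset) →
          (∀ t ∈ Set.Icc (0 : ℝ) T, HasDerivAt x (S.ceadRHS (x t)) t) →
          (∀ t ∈ Set.Icc (0 : ℝ) T, HasDerivAt x1 (S.rhs1 ε η (x1 t)) t) →
          (∀ t ∈ Set.Icc (0 : ℝ) T, HasDerivAt x2 (S.rhs2 ε η (x2 t)) t) →
          ∀ t ∈ Set.Icc (0 : ℝ) T,
            |x1 t - x t| ≤ C * T * Real.exp (C * T) * (η + ε) ∧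
            |x2 t - x t| ≤ C * T * Real.exp (C * T) * (η + ε) := by
  obtain ⟨C₁, hC₁, hrhs⟩ := S.exists_abs_rhs_sub_ceadRHS_le
  obtain ⟨K, hK⟩ := S.exists_lipschitzOnWith_ceadRHS
  refine ⟨C₁ + K + 1, by positivity, ?_⟩
  rintro ε η hε hη - x₀ - T hT x x1 x2 hx0 hx10 hx20 hx hx1 hx2 hx' hx1' hx2' t ht
  have hηε : 0 ≤ η + ε := add_nonneg hη.1.le hε.1.le
  have hgronwall {f v : ℝ → ℝ} (hf0 : f 0 = x₀) (hf : ∀ s ∈ Set.Icc 0 T, f s ∈ S.Xset)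
      (hf' : ∀ s ∈ Set.Icc 0 T, HasDerivAt f (v (f s)) s)
      (hv : ∀ y ∈ S.Xset, |v y - S.ceadRHS y| ≤ C₁ * (η + ε)) :
      |f t - x t| ≤ (C₁ + K + 1) * T * Real.exp ((C₁ + K + 1) * T) * (η + ε) :=
    calc |f t - x t| ≤ C₁ * (η + ε) * T * Real.exp (K * T) :=
          abs_sub_le_of_approx_trajectory hK hf' (fun s hs => hv _ (hf s hs)) hf hx' hx
            (hf0.trans hx0.symm) t ht
      _ ≤ (C₁ + K + 1) * (η + ε) * T * Real.exp ((C₁ + K + 1) * T) := by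
          have hK₀ : (0 : ℝ) ≤ K := K.2
          gcongr <;> linarith
      _ = _ := by ring
  exact ⟨hgronwall hx10 hx1 hx1' fun y hy => (hrhs ε η hε hη y hy).1,
    hgronwall hx20 hx2 hx2' fun y hy => (hrhs ε η hε hη y hy).2⟩

/-- Lemma 8.2 of the paper.
Fix the data of `CEADSetup`, together with the common Lipschitz constants `CrLip`
(for `x ↦ r_j^ε(x,h)`, uniformly in `h` and `ε ≤ ε0`) and `CaLip` (for the maps
`x ↦ z̄(x)b(x)m(x)p_j^ε(x)`).  Then there is a constant `C`, independent of
`x₀, T, ε, η`, such that whenever `ε, η ∈ (0, ε0]`, `η` is small enough that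
`z̄·b·m·p₁^ε − C^a_Lip·η > 0` on `X`, and `x, x₁, x₂ : [0,T] → X` solve the CEAD and
the two approximating ODEs with common initial condition `x₀ ∈ X`, one has
`sup_{t∈[0,T]} |x_j(t) − x(t)| ≤ C·T·e^{C·T}·(η + ε)` for `j = 1, 2`. -/
theorem stmt18 (S : CEADSetup)
    (hrLip : ∀ ε ∈ Set.Ioc (0 : ℝ) S.ε0, ∀ h : ℕ, 1 ≤ h → h ≤ S.A →
      LipschitzOnWith S.CrLip (fun x => S.r1 ε x h) S.Xset ∧
      LipschitzOnWith S.CrLip (fun x => S.r2 ε x h) S.Xset)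
    (haLip : ∀ ε ∈ Set.Ioc (0 : ℝ) S.ε0,
      LipschitzOnWith S.CaLip (S.a1 ε) S.Xset ∧
      LipschitzOnWith S.CaLip (S.a2 ε) S.Xset) :
    ∃ C : ℝ, 0 < C ∧
      ∀ ε η : ℝ, ε ∈ Set.Ioc (0 : ℝ) S.ε0 → η ∈ Set.Ioc (0 : ℝ) S.ε0 →
        (∀ x ∈ S.Xset, 0 < S.a1 ε x - (S.CaLip : ℝ) * η) →
        ∀ x₀ ∈ S.Xset, ∀ T : ℝ, 0 < T →
        ∀ x x1 x2 : ℝ → ℝ,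
          x 0 = x₀ → x1 0 = x₀ → x2 0 = x₀ →
          (∀ t ∈ Set.Icc (0 : ℝ) T, x t ∈ S.Xset) →
          (∀ t ∈ Set.Icc (0 : ℝ) T, x1 t ∈ S.Xset) →
          (∀ t ∈ Set.Icc (0 : ℝ) T, x2 t ∈ S.Xset) →
          (∀ t ∈ Set.Icc (0 : ℝ) T, HasDerivAt x (S.ceadRHS (x t)) t) →
          (∀ t ∈ Set.Icc (0 : ℝ) T, HasDerivAt x1 (S.rhs1 ε η (x1 t)) t) →
          (∀ t ∈ Set.Icc (0 : ℝ) T, HasDerivAt x2 (S.rhs2 ε η (x2 t)) t) →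
          ∀ t ∈ Set.Icc (0 : ℝ) T,
            |x1 t - x t| ≤ C * T * Real.exp (C * T) * (η + ε) ∧
            |x2 t - x t| ≤ C * T * Real.exp (C * T) * (η + ε) :=
  stmt18_general S
end
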